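/- arXiv:2303.01877 — 5 statements merged into one kernel-verified Lean document; each statement's English description precedes it below -/
import Mathlib

section
/- Let c, s, p be real numbers with 0 < c ≤ 1, c - s ≥ 1/p for some p > 0, and let g(t) = (1/2)t^3 - 2t^2 + (5/2)t. Then g(s/c) ≤ g(1 - c/p) = 1 - (1/2)[(c/p)^2 + (c/p)^3] < 1. -/
lemma g_mono_aux (a b : ℝ) (hab : a ≤ b) (hb : b ≤ 1) :
    (1/2) * a^3 - 2 * a^2 + (5/2) * a ≤ (1/2) * b^3 - 2 * b^2 + (5/2) * b := by
  have ha : a ≤ 1 := le_trans hab hb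
  nlinarith [mul_nonneg (by linarith : (0:ℝ) ≤ b - a) (sq_nonneg (1-a)),
    mul_nonneg (by linarith : (0:ℝ) ≤ b - a) (sq_nonneg (1-b)),
    mul_nonneg (by linarith : (0:ℝ) ≤ b - a)
      (mul_nonneg (by linarith : (0:ℝ) ≤ 1-a) (by linarith : (0:ℝ) ≤ 1-b)),
    mul_nonneg (by linarith : (0:ℝ) ≤ b - a) (by linarith : (0:ℝ) ≤ 1-a),
    mul_nonneg (by linarith : (0:ℝ) ≤ b - a) (by linarith : (0:ℝ) ≤ 1-b)]

theorem stmt_2 (c s p : ℝ) (hc0 : 0 < c) (hc1 : c ≤ 1) (hp : 0 < p)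
    (hgap : c - s ≥ 1/p) :
    let g : ℝ → ℝ := fun t => (1/2) * t^3 - 2 * t^2 + (5/2) * t
    g (s/c) ≤ g (1 - c/p) ∧
    g (1 - c/p) = 1 - (1/2) * ((c/p)^2 + (c/p)^3) ∧
    1 - (1/2) * ((c/p)^2 + (c/p)^3) < 1 := by
  intro g
  have hx : 0 < c / p := div_pos hc0 hp
  have hb1 : 1 - c / p ≤ 1 := by linarith
  have ha : s / c ≤ 1 - c / p := by
    rw [div_le_iff₀ hc0]
    have h1 : (0:ℝ) < p * c := mul_pos hp hc0
    have h2 : s ≤ c - 1 / p := by linarith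
    have h3 : c / p * c ≤ 1 / p := by
      rw [div_mul_eq_mul_div, div_le_div_iff₀ hp hp]
      nlinarith
    nlinarith
  exact ⟨g_mono_aux _ _ ha hb1, by simp only [g]; ring, by nlinarith⟩
end

section
/- Let (Ω, P, π) be a reversible Markov chain on a finite state space with conductance Φ. Then the spectral gap Δ_P of the transition matrix P (the difference between the largest eigenvalue 1 and the second largest eigenvalue) satisfies Δ_P ≥ Φ²/2. -/
open Finset

private lemma tele (a : ℕ → ℝ) {m M : ℕ} (h : m ≤ M) :
    ∑ k ∈ Finset.Ico m M, (a k - a (k+1)) = a m - a M := by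
  induction M, h using Nat.le_induction with
  | base => simp
  | succ M hm ih => rw [Finset.sum_Ico_succ_top hm, ih]; ring

section
variable {Ω : Type*} [Fintype Ω] [DecidableEq Ω]

/-- sum of indicator products over a predicate -/
private lemma ind_sum (f : Ω → Ω → ℝ) (q r : Ω → Prop) [DecidablePred q] [DecidablePred r] :
    ∑ x, ∑ y, (if q x then (if r y then f x y else 0) else 0)
      = ∑ x ∈ univ.filter q, ∑ y ∈ univ.filter r, f x y := by
  rw [Finset.sum_filter]
  apply Finset.sum_congr rfl; intro x _
  by_cases hx : q x
  · simp only [if_pos hx, Finset.sum_filter]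
  · simp [hx]

private lemma two_sided (π : Ω → ℝ) (P : Matrix Ω Ω ℝ)
    (hrev : ∀ x y, π x * P x y = π y * P y x)
    (p : Ω → Prop) [DecidablePred p] :
    ∑ x, ∑ y, π x * P x y * |(if p x then (1:ℝ) else 0) - (if p y then 1 else 0)|
      = 2 * ∑ x ∈ univ.filter p, ∑ y ∈ (univ.filter p)ᶜ, π x * P x y := by
  have hcompl : (univ.filter p)ᶜ = univ.filter (fun x => ¬ p x) := by
    ext x; simp
  have key : ∀ x y, π x * P x y * |(if p x then (1:ℝ) else 0) - (if p y then 1 else 0)|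
      = (if p x then (if ¬ p y then π x * P x y else 0) else 0)
        + (if ¬ p x then (if p y then π x * P x y else 0) else 0) := by
    intro x y
    by_cases hx : p x <;> by_cases hy : p y <;> simp [hx, hy]
  calc ∑ x, ∑ y, π x * P x y * |(if p x then (1:ℝ) else 0) - (if p y then 1 else 0)|
      = ∑ x, ∑ y, ((if p x then (if ¬ p y then π x * P x y else 0) else 0)
        + (if ¬ p x then (if p y then π x * P x y else 0) else 0)) := by
        apply Finset.sum_congr rfl; intro x _; apply Finset.sum_congr rfl; intro y _
        exact key x y
    _ = ∑ x, ∑ y, (if p x then (if ¬ p y then π x * P x y else 0) else 0)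
        + ∑ x, ∑ y, (if ¬ p x then (if p y then π x * P x y else 0) else 0) := by
        rw [← Finset.sum_add_distrib]
        apply Finset.sum_congr rfl; intro x _
        rw [← Finset.sum_add_distrib]
    _ = ∑ x ∈ univ.filter p, ∑ y ∈ univ.filter (fun y => ¬ p y), π x * P x y
        + ∑ x ∈ univ.filter (fun x => ¬ p x), ∑ y ∈ univ.filter p, π x * P x y := by
        rw [ind_sum, ind_sum]
    _ = 2 * ∑ x ∈ univ.filter p, ∑ y ∈ (univ.filter p)ᶜ, π x * P x y := by
        rw [hcompl]
        have h2 : ∑ x ∈ univ.filter (fun x => ¬ p x), ∑ y ∈ univ.filter p, π x * P x y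
            = ∑ x ∈ univ.filter p, ∑ y ∈ univ.filter (fun y => ¬ p y), π x * P x y := by
          rw [Finset.sum_comm]
          apply Finset.sum_congr rfl; intro x _
          apply Finset.sum_congr rfl; intro y _
          exact hrev y x
        rw [h2]; ring

private lemma lemA_core (π : Ω → ℝ) (P : Matrix Ω Ω ℝ)
    (hπpos : ∀ x, 0 < π x)
    (hPnn : ∀ x y, 0 ≤ P x y)
    (hrev : ∀ x y, π x * P x y = π y * P y x)
    (Φ : ℝ)
    (hΦle : ∀ S : Finset Ω, 0 < ∑ x ∈ S, π x → (∑ x ∈ S, π x) ≤ 1/2 →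
      Φ * ∑ x ∈ S, π x ≤ ∑ x ∈ S, ∑ y ∈ Sᶜ, π x * P x y)
    (ψ : Ω → ℝ) (hψ0 : ∀ x, 0 ≤ ψ x)
    (hsupp : ∑ x ∈ Finset.univ.filter (fun x => ψ x ≠ 0), π x ≤ 1/2)
    (N : ℕ) (r : Ω → ℕ) (b : ℕ → ℝ)
    (hrN : ∀ x, r x ≤ N) (hb : ∀ x, b (r x) = ψ x) (hbnn : ∀ k, 0 ≤ b k)
    (hbanti : ∀ k l, k ≤ l → b l ≤ b k) (hbN : b N = 0) (hr0 : ∃ x, r x = 0) :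
    2 * Φ * (∑ x, π x * ψ x^2) ≤ ∑ x, ∑ y, π x * P x y * |ψ x^2 - ψ y^2| := by
  classical
  have hanti2 : ∀ k l, k ≤ l → b l ^ 2 ≤ b k ^ 2 :=
    fun k l h => pow_le_pow_left₀ (hbnn l) (hbanti k l h) 2
  have htele : ∀ m, m ≤ N → ∑ k ∈ Finset.Ico m N, (b k ^2 - b (k+1) ^2) = b m ^ 2 := by
    intro m hm
    have := tele (fun k => b k ^ 2) hm
    rw [this, hbN]; ring
  -- pair identity, ordered case
  have hPI : ∀ x y : Ω, r x ≤ r y →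
      |ψ x ^2 - ψ y ^2| = ∑ k ∈ Finset.range N,
        (b k ^2 - b (k+1)^2) * |(if r x ≤ k then (1:ℝ) else 0) - (if r y ≤ k then 1 else 0)| := by
    intro x y hxy
    have h1 : |ψ x ^2 - ψ y ^2| = b (r x) ^2 - b (r y) ^2 := by
      rw [← hb x, ← hb y]
      exact abs_of_nonneg (sub_nonneg.2 (hanti2 _ _ hxy))
    have h2 : ∀ k ∈ Finset.range N,
        (b k ^2 - b (k+1)^2) * |(if r x ≤ k then (1:ℝ) else 0) - (if r y ≤ k then 1 else 0)|
        = if r x ≤ k ∧ k < r y then (b k ^2 - b (k+1)^2) else 0 := by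
      intro k _
      by_cases hx1 : r x ≤ k
      · by_cases hy1 : k < r y
        · have : ¬ r y ≤ k := not_le.2 hy1
          simp [hx1, this, hy1]
        · have : r y ≤ k := not_lt.1 hy1
          simp [hx1, this, hy1]
      · have h2 : ¬ r y ≤ k := fun h => hx1 (le_trans hxy h)
        have h3 : ¬ (r x ≤ k ∧ k < r y) := fun h => hx1 h.1
        simp [hx1, h2, h3]
    rw [Finset.sum_congr rfl h2, ← Finset.sum_filter]
    have h4 : (Finset.range N).filter (fun k => r x ≤ k ∧ k < r y) = Finset.Ico (r x) (r y) := by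
      ext k
      simp only [Finset.mem_filter, Finset.mem_range, Finset.mem_Ico]
      constructor
      · rintro ⟨_, h5, h6⟩; exact ⟨h5, h6⟩
      · rintro ⟨h5, h6⟩; exact ⟨lt_of_lt_of_le h6 (hrN y), h5, h6⟩
    rw [h4, tele (fun k => b k ^2) hxy, h1]
  have hPIall : ∀ x y : Ω,
      |ψ x ^2 - ψ y ^2| = ∑ k ∈ Finset.range N,
        (b k ^2 - b (k+1)^2) * |(if r x ≤ k then (1:ℝ) else 0) - (if r y ≤ k then 1 else 0)| := by
    intro x y
    rcases le_total (r x) (r y) with h | h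
    · exact hPI x y h
    · rw [abs_sub_comm, hPI y x h]
      exact Finset.sum_congr rfl (fun k _ => by rw [abs_sub_comm])
  -- step 1 : coarea decomposition
  have step1 : (∑ x, ∑ y, π x * P x y * |ψ x^2 - ψ y^2|)
      = ∑ k ∈ Finset.range N, (b k ^2 - b (k+1)^2) *
          (2 * ∑ x ∈ univ.filter (fun x => r x ≤ k), ∑ y ∈ (univ.filter (fun x => r x ≤ k))ᶜ,
            π x * P x y) := by
    calc ∑ x, ∑ y, π x * P x y * |ψ x^2 - ψ y^2|
        = ∑ x, ∑ y, ∑ k ∈ Finset.range N, (b k ^2 - b (k+1)^2) *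
            (π x * P x y * |(if r x ≤ k then (1:ℝ) else 0) - (if r y ≤ k then 1 else 0)|) := by
          apply Finset.sum_congr rfl; intro x _; apply Finset.sum_congr rfl; intro y _
          rw [hPIall x y, Finset.mul_sum]
          apply Finset.sum_congr rfl; intro k _; ring
      _ = ∑ k ∈ Finset.range N, ∑ x, ∑ y, (b k ^2 - b (k+1)^2) *
            (π x * P x y * |(if r x ≤ k then (1:ℝ) else 0) - (if r y ≤ k then 1 else 0)|) := by
          rw [Finset.sum_congr rfl (fun (x : Ω) _ => Finset.sum_comm), Finset.sum_comm]
      _ = ∑ k ∈ Finset.range N, (b k ^2 - b (k+1)^2) *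
            (∑ x, ∑ y, π x * P x y * |(if r x ≤ k then (1:ℝ) else 0) - (if r y ≤ k then 1 else 0)|) := by
          apply Finset.sum_congr rfl; intro k _
          rw [Finset.mul_sum]
          apply Finset.sum_congr rfl; intro x _
          rw [Finset.mul_sum]
      _ = _ := by
          apply Finset.sum_congr rfl; intro k _
          rw [two_sided π P hrev (fun x => r x ≤ k)]
  -- step 3 : conductance bound per level
  have step3 : ∀ k ∈ Finset.range N,
      2 * Φ * ((b k ^2 - b (k+1)^2) * ∑ x ∈ univ.filter (fun x => r x ≤ k), π x)
      ≤ (b k ^2 - b (k+1)^2) *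
          (2 * ∑ x ∈ univ.filter (fun x => r x ≤ k), ∑ y ∈ (univ.filter (fun x => r x ≤ k))ᶜ,
            π x * P x y) := by
    intro k _
    have hdk : 0 ≤ b k ^2 - b (k+1)^2 := sub_nonneg.2 (hanti2 k (k+1) (Nat.le_succ k))
    rcases eq_or_lt_of_le hdk with h0 | h0
    · rw [← h0]; simp
    · have hbk : 0 < b k := by
        rcases (hbnn k).lt_or_eq with h | h
        · exact h
        · exfalso
          have h1 : b (k+1) ^ 2 ≤ b k ^2 := hanti2 k (k+1) (Nat.le_succ k)
          nlinarith [sq_nonneg (b (k+1))]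
      have hsub : univ.filter (fun x => r x ≤ k) ⊆ univ.filter (fun x => ψ x ≠ 0) := by
        intro x hx
        simp only [Finset.mem_filter, Finset.mem_univ, true_and] at hx ⊢
        have h1 : b k ≤ b (r x) := hbanti (r x) k hx
        have h2 := hb x
        intro h3
        rw [h3] at h2
        linarith
      have hTle : ∑ x ∈ univ.filter (fun x => r x ≤ k), π x ≤ 1/2 :=
        le_trans (Finset.sum_le_sum_of_subset_of_nonneg hsub (fun x _ _ => (hπpos x).le)) hsupp
      have hTpos : 0 < ∑ x ∈ univ.filter (fun x => r x ≤ k), π x := by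
        obtain ⟨x0, hx0⟩ := hr0
        refine Finset.sum_pos' (fun x _ => (hπpos x).le) ⟨x0, ?_, hπpos x0⟩
        simp [hx0]
      have hQ := hΦle _ hTpos hTle
      nlinarith [mul_le_mul_of_nonneg_left hQ (le_of_lt h0)]
  -- step 4 : weighted level sums give the norm
  have step4 : ∑ k ∈ Finset.range N, (b k ^2 - b (k+1)^2) * ∑ x ∈ univ.filter (fun x => r x ≤ k), π x
      = ∑ x, π x * ψ x ^2 := by
    calc ∑ k ∈ Finset.range N, (b k ^2 - b (k+1)^2) * ∑ x ∈ univ.filter (fun x => r x ≤ k), π x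
        = ∑ k ∈ Finset.range N, ∑ x, (if r x ≤ k then (b k ^2 - b (k+1)^2) * π x else 0) := by
          apply Finset.sum_congr rfl; intro k _
          rw [Finset.sum_filter, Finset.mul_sum]
          apply Finset.sum_congr rfl; intro x _
          split <;> simp
      _ = ∑ x, ∑ k ∈ Finset.range N, (if r x ≤ k then (b k ^2 - b (k+1)^2) * π x else 0) :=
          Finset.sum_comm
      _ = ∑ x, π x * ψ x ^2 := by
          apply Finset.sum_congr rfl; intro x _
          rw [← Finset.sum_filter]
          have h5 : (Finset.range N).filter (fun k => r x ≤ k) = Finset.Ico (r x) N := by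
            ext k
            simp only [Finset.mem_filter, Finset.mem_range, Finset.mem_Ico]
            exact ⟨fun ⟨h6, h7⟩ => ⟨h7, h6⟩, fun ⟨h6, h7⟩ => ⟨h7, h6⟩⟩
          rw [h5, ← Finset.sum_mul, htele (r x) (hrN x), ← hb x]
          ring
  rw [step1, ← step4, Finset.mul_sum]
  exact Finset.sum_le_sum step3

private lemma lemA (π : Ω → ℝ) (P : Matrix Ω Ω ℝ) [Nonempty Ω]
    (hπpos : ∀ x, 0 < π x) (hπsum : ∑ x, π x = 1)
    (hPnn : ∀ x y, 0 ≤ P x y) (hProw : ∀ x, ∑ y, P x y = 1)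
    (hrev : ∀ x y, π x * P x y = π y * P y x)
    (Φ : ℝ) (hΦ0 : 0 ≤ Φ)
    (hΦle : ∀ S : Finset Ω, 0 < ∑ x ∈ S, π x → (∑ x ∈ S, π x) ≤ 1/2 →
      Φ * ∑ x ∈ S, π x ≤ ∑ x ∈ S, ∑ y ∈ Sᶜ, π x * P x y)
    (ψ : Ω → ℝ) (hψ0 : ∀ x, 0 ≤ ψ x)
    (hsupp : ∑ x ∈ Finset.univ.filter (fun x => ψ x ≠ 0), π x ≤ 1/2) :
    Φ^2 * ∑ x, π x * ψ x ^ 2 ≤ ∑ x, ∑ y, π x * P x y * (ψ x - ψ y)^2 := by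
  classical
  -- construct the sorted enumeration
  set n := Fintype.card Ω with hn
  have hn1 : 0 < n := Fintype.card_pos
  obtain ⟨σ, hσ⟩ : ∃ σ : Fin n ≃ Ω, ∀ i j : Fin n, i ≤ j → ψ (σ j) ≤ ψ (σ i) := by
    let e0 : Fin n ≃ Ω := (Fintype.equivFin Ω).symm
    let τ : Equiv.Perm (Fin n) := Tuple.sort (fun i => -ψ (e0 i))
    refine ⟨τ.trans e0, fun i j hij => ?_⟩
    have := Tuple.monotone_sort (fun i => -ψ (e0 i)) hij
    simp only [Function.comp_apply] at this
    show ψ (e0 (τ j)) ≤ ψ (e0 (τ i))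
    linarith
  set N := n - 1 with hN
  set r : Ω → ℕ := fun x => (σ.symm x : ℕ) with hr
  set b : ℕ → ℝ := fun k => if h : k < n then ψ (σ ⟨k, h⟩) else 0 with hbdef
  have hrN : ∀ x, r x ≤ N := fun x => Nat.le_sub_one_of_lt (σ.symm x).2
  have hbval : ∀ (k : ℕ) (h : k < n), b k = ψ (σ ⟨k, h⟩) := by
    intro k h; rw [hbdef]; simp [h]
  have hbvn : ∀ (k : ℕ), ¬ (k < n) → b k = 0 := by
    intro k h; rw [hbdef]; simp [h]
  have hb : ∀ x, b (r x) = ψ x := by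
    intro x
    rw [hbval (r x) (σ.symm x).2]
    congr 1
    rw [Fin.eta, Equiv.apply_symm_apply]
  have hbnn : ∀ k, 0 ≤ b k := by
    intro k
    by_cases h : k < n
    · rw [hbval k h]; exact hψ0 _
    · rw [hbvn k h]
  have hbanti : ∀ k l, k ≤ l → b l ≤ b k := by
    intro k l hkl
    by_cases hl : l < n
    · have hk : k < n := lt_of_le_of_lt hkl hl
      rw [hbval k hk, hbval l hl]
      exact hσ ⟨k, hk⟩ ⟨l, hl⟩ hkl
    · rw [hbvn l hl]; exact hbnn k
  have hex0 : ∃ x, ψ x = 0 := by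
    by_contra h
    push_neg at h
    have h2 : Finset.univ.filter (fun x => ψ x ≠ 0) = Finset.univ := by
      ext x; simp [h x]
    rw [h2, hπsum] at hsupp; norm_num at hsupp
  have hbN : b N = 0 := by
    obtain ⟨x₀, hx₀⟩ := hex0
    have h1 : b N ≤ b (r x₀) := hbanti (r x₀) N (hrN x₀)
    rw [hb x₀, hx₀] at h1
    linarith [hbnn N]
  have hr0 : ∃ x, r x = 0 := by
    refine ⟨σ ⟨0, hn1⟩, ?_⟩
    rw [hr]; simp
  have main := lemA_core π P hπpos hPnn hrev Φ hΦle ψ hψ0 hsupp N r b hrN hb hbnn hbanti hbN hr0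
  -- Cauchy–Schwarz
  set W := ∑ x, π x * ψ x ^ 2 with hW
  have hWnn : 0 ≤ W := Finset.sum_nonneg fun x _ => mul_nonneg (hπpos x).le (sq_nonneg _)
  have hcol : ∀ y, ∑ x, π x * P x y = π y := by
    intro y
    calc ∑ x, π x * P x y = ∑ x, π y * P y x := Finset.sum_congr rfl (fun x _ => hrev x y)
      _ = π y := by rw [← Finset.mul_sum, hProw, mul_one]
  have CS : (∑ x, ∑ y, π x * P x y * |ψ x^2 - ψ y^2|)^2 ≤
      (∑ x, ∑ y, π x * P x y * (ψ x - ψ y)^2) * (∑ x, ∑ y, π x * P x y * (ψ x + ψ y)^2) := by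
    have hcs := Finset.sum_mul_sq_le_sq_mul_sq Finset.univ
      (fun p : Ω × Ω => Real.sqrt (π p.1 * P p.1 p.2) * |ψ p.1 - ψ p.2|)
      (fun p : Ω × Ω => Real.sqrt (π p.1 * P p.1 p.2) * (ψ p.1 + ψ p.2))
    simp only [Fintype.sum_prod_type] at hcs
    have e1 : ∀ x y : Ω, Real.sqrt (π x * P x y) * |ψ x - ψ y| *
        (Real.sqrt (π x * P x y) * (ψ x + ψ y)) = π x * P x y * |ψ x ^2 - ψ y^2| := by
      intro x y
      have hnn : 0 ≤ π x * P x y := mul_nonneg (hπpos x).le (hPnn x y)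
      have h2 : |ψ x - ψ y| * (ψ x + ψ y) = |ψ x^2 - ψ y^2| := by
        have hs : 0 ≤ ψ x + ψ y := add_nonneg (hψ0 x) (hψ0 y)
        rw [← abs_of_nonneg hs, ← abs_mul]
        congr 1; ring
      calc Real.sqrt (π x * P x y) * |ψ x - ψ y| * (Real.sqrt (π x * P x y) * (ψ x + ψ y))
          = (Real.sqrt (π x * P x y) * Real.sqrt (π x * P x y)) * (|ψ x - ψ y| * (ψ x + ψ y)) := by
            ring
        _ = π x * P x y * |ψ x ^2 - ψ y^2| := by rw [Real.mul_self_sqrt hnn, h2]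
    have e2 : ∀ x y : Ω, (Real.sqrt (π x * P x y) * |ψ x - ψ y|)^2 = π x * P x y * (ψ x - ψ y)^2 := by
      intro x y
      rw [mul_pow, Real.sq_sqrt (mul_nonneg (hπpos x).le (hPnn x y)), sq_abs]
    have e3 : ∀ x y : Ω, (Real.sqrt (π x * P x y) * (ψ x + ψ y))^2 = π x * P x y * (ψ x + ψ y)^2 := by
      intro x y
      rw [mul_pow, Real.sq_sqrt (mul_nonneg (hπpos x).le (hPnn x y))]
    simp only [e1, e2, e3] at hcs
    exact hcs
  have step6 : ∑ x, ∑ y, π x * P x y * (ψ x + ψ y)^2 ≤ 4 * W := by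
    have h1 : ∀ x : Ω, ∀ y : Ω, π x * P x y * (ψ x + ψ y)^2
        ≤ 2 * (π x * P x y * ψ x ^2) + 2 * (π x * P x y * ψ y ^2) := by
      intro x y
      have hnn : 0 ≤ π x * P x y := mul_nonneg (hπpos x).le (hPnn x y)
      nlinarith [mul_nonneg hnn (sq_nonneg (ψ x - ψ y))]
    have hx2 : ∑ x, ∑ y, π x * P x y * ψ x ^2 = W := by
      rw [hW]
      apply Finset.sum_congr rfl; intro x _
      calc ∑ y, π x * P x y * ψ x ^2 = (∑ y, P x y) * (π x * ψ x ^2) := by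
            rw [Finset.sum_mul]
            apply Finset.sum_congr rfl; intro y _; ring
        _ = π x * ψ x ^2 := by rw [hProw, one_mul]
    have hy2 : ∑ x, ∑ y, π x * P x y * ψ y ^2 = W := by
      rw [Finset.sum_comm, hW]
      apply Finset.sum_congr rfl; intro y _
      calc ∑ x, π x * P x y * ψ y ^2 = (∑ x, π x * P x y) * ψ y ^2 := by rw [Finset.sum_mul]
        _ = π y * ψ y ^2 := by rw [hcol]
    calc ∑ x, ∑ y, π x * P x y * (ψ x + ψ y)^2
        ≤ ∑ x, ∑ y, (2 * (π x * P x y * ψ x ^2) + 2 * (π x * P x y * ψ y ^2)) :=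
          Finset.sum_le_sum (fun x _ => Finset.sum_le_sum (fun y _ => h1 x y))
      _ = 2 * (∑ x, ∑ y, π x * P x y * ψ x ^2) + 2 * (∑ x, ∑ y, π x * P x y * ψ y ^2) := by
          simp only [Finset.sum_add_distrib, ← Finset.mul_sum]
      _ = 4 * W := by rw [hx2, hy2]; ring
  set D := ∑ x, ∑ y, π x * P x y * (ψ x - ψ y)^2 with hD
  have hDnn : 0 ≤ D :=
    Finset.sum_nonneg fun x _ => Finset.sum_nonneg fun y _ =>
      mul_nonneg (mul_nonneg (hπpos x).le (hPnn x y)) (sq_nonneg _)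
  rcases hWnn.lt_or_eq with hWpos | hW0
  · -- W > 0
    have hsq : (2 * Φ * W)^2 ≤ (∑ x, ∑ y, π x * P x y * |ψ x^2 - ψ y^2|)^2 := by
      apply pow_le_pow_left₀ (by positivity) main
    have hS : (∑ x, ∑ y, π x * P x y * |ψ x^2 - ψ y^2|)^2 ≤ D * (4 * W) := by
      refine le_trans CS ?_
      apply mul_le_mul_of_nonneg_left step6 hDnn
    have h7 : 4 * Φ^2 * W * W ≤ 4 * D * W := by nlinarith
    have h8 : Φ^2 * W ≤ D := by
      have h9 := le_of_mul_le_mul_right (by linarith : (Φ^2 * W) * W ≤ D * W) hWpos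
      exact h9
    exact h8
  · rw [← hW0]
    simpa using hDnn

private lemma posneg_sq (u v : ℝ) :
    (max u 0 - max v 0)^2 + (max (-u) 0 - max (-v) 0)^2 ≤ (u - v)^2 := by
  rcases le_total u 0 with hu | hu <;> rcases le_total v 0 with hv | hv
  · rw [max_eq_right hu, max_eq_right hv, max_eq_left (neg_nonneg.2 hu),
      max_eq_left (neg_nonneg.2 hv)]
    nlinarith
  · rw [max_eq_right hu, max_eq_left hv, max_eq_left (neg_nonneg.2 hu),
      max_eq_right (neg_nonpos.2 hv)]
    nlinarith [mul_nonneg (neg_nonneg.2 hu) hv]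
  · rw [max_eq_left hu, max_eq_right hv, max_eq_right (neg_nonpos.2 hu),
      max_eq_left (neg_nonneg.2 hv)]
    nlinarith [mul_nonneg hu (neg_nonneg.2 hv)]
  · rw [max_eq_left hu, max_eq_left hv, max_eq_right (neg_nonpos.2 hu),
      max_eq_right (neg_nonpos.2 hv)]
    nlinarith

private lemma posneg_sq_add (u : ℝ) : (max u 0)^2 + (max (-u) 0)^2 = u^2 := by
  rcases le_total u 0 with hu | hu
  · rw [max_eq_right hu, max_eq_left (neg_nonneg.2 hu)]; ring
  · rw [max_eq_left hu, max_eq_right (neg_nonpos.2 hu)]; ring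

private lemma lemB (π : Ω → ℝ) (P : Matrix Ω Ω ℝ) [Nonempty Ω]
    (hπpos : ∀ x, 0 < π x) (hπsum : ∑ x, π x = 1)
    (hPnn : ∀ x y, 0 ≤ P x y) (hProw : ∀ x, ∑ y, P x y = 1)
    (hrev : ∀ x y, π x * P x y = π y * P y x)
    (Φ : ℝ) (hΦ0 : 0 ≤ Φ)
    (hΦle : ∀ S : Finset Ω, 0 < ∑ x ∈ S, π x → (∑ x ∈ S, π x) ≤ 1/2 →
      Φ * ∑ x ∈ S, π x ≤ ∑ x ∈ S, ∑ y ∈ Sᶜ, π x * P x y)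
    (g : Ω → ℝ) (hg : ∑ x, π x * g x = 0) :
    Φ^2 * ∑ x, π x * g x ^ 2 ≤ ∑ x, ∑ y, π x * P x y * (g x - g y)^2 := by
  classical
  obtain ⟨c, hc1, hc2⟩ : ∃ c : ℝ, (∑ x ∈ univ.filter (fun x => g x > c), π x ≤ 1/2)
      ∧ (∑ x ∈ univ.filter (fun x => g x < c), π x ≤ 1/2) := by
    have hVne : (Finset.univ.image g).Nonempty :=
      ⟨g (Classical.arbitrary Ω), Finset.mem_image_of_mem g (Finset.mem_univ _)⟩
    set V := Finset.univ.image g with hV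
    set C := V.filter (fun c => ∑ x ∈ univ.filter (fun x => g x > c), π x ≤ 1/2) with hC
    have hCne : C.Nonempty := by
      refine ⟨V.max' hVne, Finset.mem_filter.2 ⟨V.max'_mem hVne, ?_⟩⟩
      have hemp : univ.filter (fun x => g x > V.max' hVne) = ∅ := by
        ext x
        simp only [mem_filter, mem_univ, true_and, Finset.notMem_empty, iff_false, not_lt]
        exact Finset.le_max' V (g x) (Finset.mem_image_of_mem g (mem_univ x))
      rw [hemp]
      simp
    set c := C.min' hCne with hcdef
    have hcC : c ∈ C := C.min'_mem hCne
    refine ⟨c, (Finset.mem_filter.1 hcC).2, ?_⟩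
    set B := V.filter (fun t => t < c) with hB
    by_cases hBne : B.Nonempty
    · set c' := B.max' hBne with hc'
      have hc'V : c' ∈ V := (Finset.mem_filter.1 (B.max'_mem hBne)).1
      have hc'lt : c' < c := (Finset.mem_filter.1 (B.max'_mem hBne)).2
      have hc'notC : c' ∉ C := fun h => absurd (C.min'_le c' h) (not_le.2 hc'lt)
      have hgt : ¬ (∑ x ∈ univ.filter (fun x => g x > c'), π x ≤ 1/2) := by
        intro h; exact hc'notC (Finset.mem_filter.2 ⟨hc'V, h⟩)
      push_neg at hgt
      have hsub : univ.filter (fun x => g x < c) ⊆ univ.filter (fun x => ¬ (g x > c')) := by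
        intro x hx
        simp only [mem_filter, mem_univ, true_and, not_lt] at hx ⊢
        have hxB : g x ∈ B := Finset.mem_filter.2 ⟨Finset.mem_image_of_mem g (mem_univ x), hx⟩
        exact B.le_max' _ hxB
      have hsplit : ∑ x ∈ univ.filter (fun x => ¬ (g x > c')), π x
          = 1 - ∑ x ∈ univ.filter (fun x => g x > c'), π x := by
        have h6 := Finset.sum_filter_add_sum_filter_not univ (fun x => g x > c') π
        rw [hπsum] at h6
        linarith
      have h7 : ∑ x ∈ univ.filter (fun x => g x < c), π x
          ≤ ∑ x ∈ univ.filter (fun x => ¬ (g x > c')), π x :=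
        Finset.sum_le_sum_of_subset_of_nonneg hsub (fun x _ _ => (hπpos x).le)
      rw [hsplit] at h7
      linarith
    · have hemp : univ.filter (fun x => g x < c) = ∅ := by
        ext x
        simp only [mem_filter, mem_univ, true_and, Finset.notMem_empty, iff_false, not_lt]
        by_contra hx
        push_neg at hx
        exact hBne ⟨g x, Finset.mem_filter.2 ⟨Finset.mem_image_of_mem g (mem_univ x), hx⟩⟩
      rw [hemp]
      simp
  set ψp : Ω → ℝ := fun x => max (g x - c) 0 with hψp
  set ψm : Ω → ℝ := fun x => max (c - g x) 0 with hψm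
  have hψp0 : ∀ x, (0:ℝ) ≤ ψp x := fun x => le_max_right _ _
  have hψm0 : ∀ x, (0:ℝ) ≤ ψm x := fun x => le_max_right _ _
  have hsuppp : ∑ x ∈ univ.filter (fun x => ψp x ≠ 0), π x ≤ 1/2 := by
    refine le_trans (Finset.sum_le_sum_of_subset_of_nonneg ?_ (fun x _ _ => (hπpos x).le)) hc1
    intro x hx
    simp only [mem_filter, mem_univ, true_and] at hx ⊢
    by_contra h
    push_neg at h
    exact hx (max_eq_right (by linarith))
  have hsuppm : ∑ x ∈ univ.filter (fun x => ψm x ≠ 0), π x ≤ 1/2 := by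
    refine le_trans (Finset.sum_le_sum_of_subset_of_nonneg ?_ (fun x _ _ => (hπpos x).le)) hc2
    intro x hx
    simp only [mem_filter, mem_univ, true_and] at hx ⊢
    by_contra h
    push_neg at h
    exact hx (max_eq_right (by linarith))
  have hp := lemA π P hπpos hπsum hPnn hProw hrev Φ hΦ0 hΦle ψp hψp0 hsuppp
  have hm := lemA π P hπpos hπsum hPnn hProw hrev Φ hΦ0 hΦle ψm hψm0 hsuppm
  have hpt : ∀ x y : Ω, (ψp x - ψp y)^2 + (ψm x - ψm y)^2 ≤ (g x - g y)^2 := by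
    intro x y
    have h1 := posneg_sq (g x - c) (g y - c)
    simp only [neg_sub] at h1
    have h2 : g x - c - (g y - c) = g x - g y := by ring
    rw [h2] at h1
    exact h1
  have hDsum : (∑ x, ∑ y, π x * P x y * (ψp x - ψp y)^2)
      + (∑ x, ∑ y, π x * P x y * (ψm x - ψm y)^2)
      ≤ ∑ x, ∑ y, π x * P x y * (g x - g y)^2 := by
    rw [← Finset.sum_add_distrib]
    apply Finset.sum_le_sum; intro x _
    rw [← Finset.sum_add_distrib]
    apply Finset.sum_le_sum; intro y _
    have hnn : 0 ≤ π x * P x y := mul_nonneg (hπpos x).le (hPnn x y)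
    nlinarith [mul_le_mul_of_nonneg_left (hpt x y) hnn]
  have hnorm : ∑ x, π x * g x ^2 ≤ (∑ x, π x * ψp x ^2) + (∑ x, π x * ψm x ^2) := by
    have h1 : ∀ x : Ω, π x * ψp x ^2 + π x * ψm x ^2 = π x * (g x - c)^2 := by
      intro x
      have h2 := posneg_sq_add (g x - c)
      simp only [neg_sub] at h2
      show π x * (max (g x - c) 0)^2 + π x * (max (c - g x) 0)^2 = _
      rw [← mul_add, h2]
    have h2 : (∑ x, π x * ψp x ^2) + (∑ x, π x * ψm x ^2) = ∑ x, π x * (g x - c)^2 := by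
      rw [← Finset.sum_add_distrib]
      exact Finset.sum_congr rfl (fun x _ => h1 x)
    have h3 : ∑ x, π x * (g x - c)^2
        = (∑ x, π x * g x ^2) - 2*c*(∑ x, π x * g x) + c^2 * ∑ x, π x := by
      calc ∑ x, π x * (g x - c)^2
          = ∑ x, (π x * g x^2 - 2*c*(π x * g x) + c^2 * π x) :=
            Finset.sum_congr rfl (fun x _ => by ring)
        _ = _ := by
            rw [Finset.sum_add_distrib, Finset.sum_sub_distrib, ← Finset.mul_sum, ← Finset.mul_sum]
    rw [h2, h3, hg, hπsum]
    nlinarith [sq_nonneg c]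
  calc Φ^2 * ∑ x, π x * g x ^2
      ≤ Φ^2 * ((∑ x, π x * ψp x ^2) + (∑ x, π x * ψm x ^2)) :=
        mul_le_mul_of_nonneg_left hnorm (sq_nonneg Φ)
    _ = Φ^2 * (∑ x, π x * ψp x^2) + Φ^2 * (∑ x, π x * ψm x^2) := by ring
    _ ≤ (∑ x, ∑ y, π x * P x y * (ψp x - ψp y)^2)
        + (∑ x, ∑ y, π x * P x y * (ψm x - ψm y)^2) := add_le_add hp hm
    _ ≤ _ := hDsum

private lemma lemC (π : Ω → ℝ) (P : Matrix Ω Ω ℝ) [Nonempty Ω]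
    (hπpos : ∀ x, 0 < π x) (hπsum : ∑ x, π x = 1)
    (hPnn : ∀ x y, 0 ≤ P x y) (hProw : ∀ x, ∑ y, P x y = 1)
    (hrev : ∀ x y, π x * P x y = π y * P y x)
    (Φ : ℝ) (hΦ0 : 0 ≤ Φ)
    (hΦle : ∀ S : Finset Ω, 0 < ∑ x ∈ S, π x → (∑ x ∈ S, π x) ≤ 1/2 →
      Φ * ∑ x ∈ S, π x ≤ ∑ x ∈ S, ∑ y ∈ Sᶜ, π x * P x y)
    (lam : ℝ) (f : Ω → ℝ)
    (hev : (Matrix.of fun x y => Real.sqrt (π x) * P x y / Real.sqrt (π y)).mulVec f = lam • f)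
    (hforth : ∑ x, Real.sqrt (π x) * f x = 0)
    (hfnz : 0 < ∑ x, f x ^ 2) :
    lam ≤ 1 - Φ^2/2 := by
  classical
  have hsq : ∀ x, 0 < Real.sqrt (π x) := fun x => Real.sqrt_pos.2 (hπpos x)
  set g : Ω → ℝ := fun x => f x / Real.sqrt (π x) with hgdef
  have hf : ∀ x, f x = Real.sqrt (π x) * g x := by
    intro x
    show f x = Real.sqrt (π x) * (f x / Real.sqrt (π x))
    rw [mul_comm, div_mul_cancel₀ _ (hsq x).ne']
  have hπg : ∀ x, π x * g x ^2 = f x ^2 := by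
    intro x
    rw [hf x, mul_pow, Real.sq_sqrt (hπpos x).le]
  have hgf2 : ∑ x, π x * g x ^ 2 = ∑ x, f x ^2 :=
    Finset.sum_congr rfl (fun x _ => hπg x)
  have hgsum : ∑ x, π x * g x = 0 := by
    rw [← hforth]
    apply Finset.sum_congr rfl; intro x _
    rw [hf x, ← mul_assoc, Real.mul_self_sqrt (hπpos x).le]
  have hcol : ∀ y, ∑ x, π x * P x y = π y := by
    intro y
    calc ∑ x, π x * P x y = ∑ x, π y * P y x := Finset.sum_congr rfl (fun x _ => hrev x y)
      _ = π y := by rw [← Finset.mul_sum, hProw, mul_one]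
  have hinner : ∑ x, ∑ y, π x * P x y * (g x * g y) = lam * ∑ x, f x ^2 := by
    have h1 : ∀ x, ∑ y, Real.sqrt (π x) * P x y / Real.sqrt (π y) * f y = lam * f x := by
      intro x
      have h2 := congrFun hev x
      simp only [Matrix.mulVec, dotProduct, Matrix.of_apply, Pi.smul_apply,
        smul_eq_mul] at h2
      exact h2
    calc ∑ x, ∑ y, π x * P x y * (g x * g y)
        = ∑ x, f x * ∑ y, Real.sqrt (π x) * P x y / Real.sqrt (π y) * f y := by
          apply Finset.sum_congr rfl; intro x _
          rw [Finset.mul_sum]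
          apply Finset.sum_congr rfl; intro y _
          rw [hf x, hf y, ← Real.mul_self_sqrt (hπpos x).le]
          have h3 := (hsq x).ne'
          have h4 := (hsq y).ne'
          field_simp
          rw [Real.sqrt_sq (hsq x).le]; ring
      _ = ∑ x, f x * (lam * f x) := by
          apply Finset.sum_congr rfl; intro x _
          rw [h1 x]
      _ = lam * ∑ x, f x ^2 := by
          rw [Finset.mul_sum]
          apply Finset.sum_congr rfl; intro x _
          ring
  have hrowsum : ∑ x, ∑ y, π x * P x y * g x ^2 = ∑ x, π x * g x ^2 := by
    apply Finset.sum_congr rfl; intro x _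
    calc ∑ y, π x * P x y * g x ^2 = (∑ y, P x y) * (π x * g x ^2) := by
          rw [Finset.sum_mul]
          apply Finset.sum_congr rfl; intro y _; ring
      _ = π x * g x ^2 := by rw [hProw, one_mul]
  have hcolsum : ∑ x, ∑ y, π x * P x y * g y ^2 = ∑ y, π y * g y ^2 := by
    rw [Finset.sum_comm]
    apply Finset.sum_congr rfl; intro y _
    calc ∑ x, π x * P x y * g y ^2 = (∑ x, π x * P x y) * g y ^2 := by rw [Finset.sum_mul]
      _ = π y * g y ^2 := by rw [hcol]
  have hD : ∑ x, ∑ y, π x * P x y * (g x - g y)^2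
      = 2 * (∑ x, f x ^2) - 2 * (lam * ∑ x, f x ^2) := by
    calc ∑ x, ∑ y, π x * P x y * (g x - g y)^2
        = ∑ x, ∑ y, (π x * P x y * g x ^2 + π x * P x y * g y ^2
            - 2 * (π x * P x y * (g x * g y))) := by
          apply Finset.sum_congr rfl; intro x _
          apply Finset.sum_congr rfl; intro y _
          ring
      _ = (∑ x, ∑ y, π x * P x y * g x ^2) + (∑ x, ∑ y, π x * P x y * g y ^2)
            - 2 * (∑ x, ∑ y, π x * P x y * (g x * g y)) := by
          simp only [Finset.sum_add_distrib, Finset.sum_sub_distrib, ← Finset.mul_sum]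
      _ = _ := by rw [hrowsum, hcolsum, hinner, hgf2]; ring
  have hB := lemB π P hπpos hπsum hPnn hProw hrev Φ hΦ0 hΦle g hgsum
  rw [hD, hgf2] at hB
  nlinarith [hB, hfnz]

end

theorem stmt_10 {Ω : Type*} [Fintype Ω] [DecidableEq Ω] [Nonempty Ω]
    (π : Ω → ℝ) (P : Matrix Ω Ω ℝ)
    (hπpos : ∀ x, 0 < π x) (hπsum : ∑ x, π x = 1)
    (hPnn : ∀ x y, 0 ≤ P x y) (hProw : ∀ x, ∑ y, P x y = 1)
    (hrev : ∀ x y, π x * P x y = π y * P y x)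
    -- the symmetrization `A = D^{1/2} P D^{-1/2}`, which has the same eigenvalues as `P`
    (hA : (Matrix.of fun x y => Real.sqrt (π x) * P x y / Real.sqrt (π y)).IsHermitian) :
    -- conductance
    let Φ : ℝ := sInf {c : ℝ | ∃ S : Finset Ω, 0 < ∑ x ∈ S, π x ∧ (∑ x ∈ S, π x) ≤ 1/2 ∧
      c = (∑ x ∈ S, π x)⁻¹ * ∑ x ∈ S, ∑ y ∈ Sᶜ, π x * P x y}
    -- the largest eigenvalue is 1 and every other eigenvalue is at most `1 - Φ²/2`
    ∃ i₀, hA.eigenvalues i₀ = 1 ∧ ∀ i, i ≠ i₀ → hA.eigenvalues i ≤ 1 - Φ^2 / 2 := by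
  intro Φ
  classical
  have hsq : ∀ x, 0 < Real.sqrt (π x) := fun x => Real.sqrt_pos.2 (hπpos x)
  set A := Matrix.of fun x y => Real.sqrt (π x) * P x y / Real.sqrt (π y) with hAdef
  have hΦ0 : 0 ≤ Φ := by
    apply Real.sInf_nonneg
    rintro c ⟨S, hS1, hS2, rfl⟩
    apply mul_nonneg (inv_nonneg.2 hS1.le)
    exact Finset.sum_nonneg fun x _ => Finset.sum_nonneg fun y _ =>
      mul_nonneg (hπpos x).le (hPnn x y)
  have hΦle : ∀ S : Finset Ω, 0 < ∑ x ∈ S, π x → (∑ x ∈ S, π x) ≤ 1/2 →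
      Φ * ∑ x ∈ S, π x ≤ ∑ x ∈ S, ∑ y ∈ Sᶜ, π x * P x y := by
    intro S h1 h2
    have hbdd : BddBelow {c : ℝ | ∃ S : Finset Ω, 0 < ∑ x ∈ S, π x ∧ (∑ x ∈ S, π x) ≤ 1/2 ∧
        c = (∑ x ∈ S, π x)⁻¹ * ∑ x ∈ S, ∑ y ∈ Sᶜ, π x * P x y} := by
      refine ⟨0, ?_⟩
      rintro c ⟨S', hS1', hS2', rfl⟩
      apply mul_nonneg (inv_nonneg.2 hS1'.le)
      exact Finset.sum_nonneg fun x _ => Finset.sum_nonneg fun y _ =>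
        mul_nonneg (hπpos x).le (hPnn x y)
    have hle : Φ ≤ (∑ x ∈ S, π x)⁻¹ * ∑ x ∈ S, ∑ y ∈ Sᶜ, π x * P x y :=
      csInf_le hbdd ⟨S, h1, h2, rfl⟩
    calc Φ * ∑ x ∈ S, π x
        ≤ ((∑ x ∈ S, π x)⁻¹ * ∑ x ∈ S, ∑ y ∈ Sᶜ, π x * P x y) * ∑ x ∈ S, π x :=
          mul_le_mul_of_nonneg_right hle h1.le
      _ = ∑ x ∈ S, ∑ y ∈ Sᶜ, π x * P x y := by
          field_simp
  have hAv : A.mulVec (fun x => Real.sqrt (π x)) = (fun x => Real.sqrt (π x)) := by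
    funext x
    simp only [Matrix.mulVec, dotProduct, hAdef, Matrix.of_apply]
    calc ∑ y, Real.sqrt (π x) * P x y / Real.sqrt (π y) * Real.sqrt (π y)
        = ∑ y, Real.sqrt (π x) * P x y := by
          apply Finset.sum_congr rfl; intro y _
          rw [div_mul_cancel₀ _ (hsq y).ne']
      _ = Real.sqrt (π x) := by rw [← Finset.mul_sum, hProw, mul_one]
  have hsymm : ∀ x y, A x y = A y x := by
    intro x y
    have h1 := congrFun (congrFun hA y) x
    rw [Matrix.conjTranspose_apply] at h1
    simpa using h1
  set u := hA.eigenvectorBasis with hu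
  set lam := hA.eigenvalues with hlam
  have hmul : ∀ i, A.mulVec (u i) = lam i • ⇑(u i) := fun i => hA.mulVec_eigenvectorBasis i
  have hci : ∀ i, lam i * (∑ x, u i x * Real.sqrt (π x)) = ∑ x, u i x * Real.sqrt (π x) := by
    intro i
    have h1 : ∑ x, u i x * (A.mulVec (fun z => Real.sqrt (π z))) x
        = ∑ x, u i x * Real.sqrt (π x) := by rw [hAv]
    have h2 : ∑ x, u i x * (A.mulVec (fun z => Real.sqrt (π z))) x
        = lam i * ∑ x, u i x * Real.sqrt (π x) := by
      calc ∑ x, u i x * (A.mulVec (fun z => Real.sqrt (π z))) x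
          = ∑ x, ∑ y, u i x * (A x y * Real.sqrt (π y)) := by
            apply Finset.sum_congr rfl; intro x _
            simp only [Matrix.mulVec, dotProduct]
            rw [Finset.mul_sum]
        _ = ∑ y, ∑ x, u i x * (A x y * Real.sqrt (π y)) := Finset.sum_comm
        _ = ∑ y, (∑ x, A y x * u i x) * Real.sqrt (π y) := by
            apply Finset.sum_congr rfl; intro y _
            rw [Finset.sum_mul]
            apply Finset.sum_congr rfl; intro x _
            rw [hsymm x y]; ring
        _ = ∑ y, (lam i * u i y) * Real.sqrt (π y) := by
            apply Finset.sum_congr rfl; intro y _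
            have h3 := congrFun (hmul i) y
            simp only [Matrix.mulVec, dotProduct, Pi.smul_apply, smul_eq_mul] at h3
            rw [h3]
        _ = lam i * ∑ x, u i x * Real.sqrt (π x) := by
            rw [Finset.mul_sum]
            apply Finset.sum_congr rfl; intro y _
            ring
    exact h2.symm.trans h1
  have hinner_eq : ∀ (w z : EuclideanSpace ℝ Ω), (inner ℝ w z : ℝ) = ∑ x, w x * z x := by
    intro w z
    simp [PiLp.inner_apply, RCLike.inner_apply, conj_trivial, mul_comm]
  have horth := hA.eigenvectorBasis.orthonormal
  have hortho1 : ∀ i, ∑ x, u i x * u i x = 1 := by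
    intro i
    have h1 := (orthonormal_iff_ite.1 horth) i i
    rw [hinner_eq] at h1
    simpa using h1
  have hortho2 : ∀ i j, i ≠ j → ∑ x, u i x * u j x = 0 := by
    intro i j hij
    have h1 := (orthonormal_iff_ite.1 horth) i j
    rw [hinner_eq] at h1
    simpa [hij] using h1
  have hex : ∃ i₀, lam i₀ = 1 := by
    by_contra h
    push_neg at h
    have hc0 : ∀ i, ∑ x, u i x * Real.sqrt (π x) = 0 := by
      intro i
      have h3 : (lam i - 1) * (∑ x, u i x * Real.sqrt (π x)) = 0 := by
        rw [sub_mul, one_mul, hci i, sub_self]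
      rcases mul_eq_zero.1 h3 with h4 | h4
      · exact absurd (by linarith : lam i = 1) (h i)
      · exact h4
    set v : EuclideanSpace ℝ Ω := WithLp.toLp 2 (fun x => Real.sqrt (π x)) with hv
    have hvrep := (hA.eigenvectorBasis).sum_repr' v
    have hv0 : (0 : EuclideanSpace ℝ Ω) = v := by
      rw [← hvrep]
      symm
      apply Finset.sum_eq_zero
      intro i _
      rw [hinner_eq]
      have : ∑ x, u i x * v x = 0 := hc0 i
      rw [this, zero_smul]
    have h5 := congrArg (fun w : EuclideanSpace ℝ Ω => w (Classical.arbitrary Ω)) hv0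
    have h6 : (0:ℝ) = Real.sqrt (π (Classical.arbitrary Ω)) := h5
    exact absurd h6.symm (ne_of_gt (hsq _))
  obtain ⟨i₀, hi₀⟩ := hex
  refine ⟨i₀, hi₀, ?_⟩
  intro i hi
  by_cases hc : (∑ x, u i x * Real.sqrt (π x)) = 0
  · refine lemC π P hπpos hπsum hPnn hProw hrev Φ hΦ0 hΦle (lam i) (fun x => u i x) ?_ ?_ ?_
    · exact hmul i
    · rw [← hc]
      apply Finset.sum_congr rfl; intro x _
      ring
    · have h1 : ∑ x, (u i x)^2 = 1 := by
        rw [← hortho1 i]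
        apply Finset.sum_congr rfl; intro x _
        ring
      rw [h1]
      norm_num
  · have hlam1 : lam i = 1 := by
      have h3 : (lam i - 1) * (∑ x, u i x * Real.sqrt (π x)) = 0 := by
        rw [sub_mul, one_mul, hci i, sub_self]
      rcases mul_eq_zero.1 h3 with h4 | h4
      · linarith
      · exact absurd h4 hc
    rw [hlam1]
    set ci := ∑ x, u i x * Real.sqrt (π x) with hcidef
    set ci0 := ∑ x, u i₀ x * Real.sqrt (π x) with hci0def
    refine lemC π P hπpos hπsum hPnn hProw hrev Φ hΦ0 hΦle 1
      (fun x => ci0 * u i x - ci * u i₀ x) ?_ ?_ ?_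
    · funext x
      have hAui := congrFun (hmul i) x
      have hAui0 := congrFun (hmul i₀) x
      simp only [Matrix.mulVec, dotProduct, Pi.smul_apply, smul_eq_mul] at hAui hAui0 ⊢
      calc ∑ y, A x y * (ci0 * u i y - ci * u i₀ y)
          = ci0 * (∑ y, A x y * u i y) - ci * (∑ y, A x y * u i₀ y) := by
            rw [Finset.mul_sum, Finset.mul_sum, ← Finset.sum_sub_distrib]
            apply Finset.sum_congr rfl; intro y _; ring
        _ = 1 * (ci0 * u i x - ci * u i₀ x) := by
            rw [hAui, hAui0, hlam1, hi₀]; ring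
    · calc ∑ x, Real.sqrt (π x) * (ci0 * u i x - ci * u i₀ x)
          = ci0 * (∑ x, u i x * Real.sqrt (π x)) - ci * (∑ x, u i₀ x * Real.sqrt (π x)) := by
            rw [Finset.mul_sum, Finset.mul_sum, ← Finset.sum_sub_distrib]
            apply Finset.sum_congr rfl; intro x _; ring
        _ = 0 := by rw [← hcidef, ← hci0def]; ring
    · have e : ∑ x, (ci0 * u i x - ci * u i₀ x)^2
          = ci0^2 * (∑ x, u i x * u i x) - 2*ci0*ci*(∑ x, u i x * u i₀ x)
            + ci^2 * (∑ x, u i₀ x * u i₀ x) := by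
        calc ∑ x, (ci0 * u i x - ci * u i₀ x)^2
            = ∑ x, (ci0^2 * (u i x * u i x) - 2*ci0*ci*(u i x * u i₀ x)
                + ci^2 * (u i₀ x * u i₀ x)) := Finset.sum_congr rfl (fun x _ => by ring)
          _ = _ := by
              rw [Finset.sum_add_distrib, Finset.sum_sub_distrib, ← Finset.mul_sum,
                ← Finset.mul_sum, ← Finset.mul_sum]
      rw [e, hortho1 i, hortho1 i₀, hortho2 i i₀ hi]
      have h5 : 0 < ci^2 := lt_of_le_of_ne (sq_nonneg ci) (Ne.symm (pow_ne_zero 2 hc))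
      nlinarith [sq_nonneg ci0]
end

section
/- For any density operators ρ₀ and ρ₁, 1 - F(ρ₀, ρ₁) ≤ td(ρ₀, ρ₁) ≤ √(1 - F(ρ₀,ρ₁)²), where F is the Uhlmann fidelity and td is the trace distance. Moreover, when ρ₀ = |ψ⟩⟨ψ| is pure, F(ρ₀, ρ₁) = √(⟨ψ|ρ₁|ψ⟩). -/
open Matrix
open scoped ComplexOrder

/-- The old Mathlib `Matrix.PosSemidef.sqrt` (removed since), with its old definition. -/
noncomputable def psdSqrt {n : ℕ} {A : Matrix (Fin n) (Fin n) ℂ} (hA : A.PosSemidef) :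
    Matrix (Fin n) (Fin n) ℂ :=
  (hA.1.eigenvectorUnitary : Matrix (Fin n) (Fin n) ℂ) *
    diagonal ((↑) ∘ Real.sqrt ∘ hA.1.eigenvalues) *
    (star hA.1.eigenvectorUnitary : Matrix (Fin n) (Fin n) ℂ)

theorem psdSqrt_posSemidef {n : ℕ} {A : Matrix (Fin n) (Fin n) ℂ} (hA : A.PosSemidef) :
    (psdSqrt hA).PosSemidef := by
  unfold psdSqrt
  have hD : (diagonal ((↑) ∘ Real.sqrt ∘ hA.1.eigenvalues : Fin n → ℂ)).PosSemidef := by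
    rw [posSemidef_diagonal_iff]
    intro i
    exact Complex.zero_le_real.mpr (Real.sqrt_nonneg _)
  have := hD.mul_mul_conjTranspose_same (hA.1.eigenvectorUnitary : Matrix (Fin n) (Fin n) ℂ)
  simpa [Matrix.star_eq_conjTranspose] using this

/-- The trace norm `‖M‖₁ = Tr √(Mᴴ M)` of a complex square matrix. -/
noncomputable def traceNorm {n : ℕ} (M : Matrix (Fin n) (Fin n) ℂ) : ℝ :=
  ((psdSqrt (Matrix.posSemidef_conjTranspose_mul_self M)).trace).re

/-- Trace distance `td(ρ₀,ρ₁) = ½‖ρ₀ - ρ₁‖₁`. -/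
noncomputable def traceDist {n : ℕ} (ρ₀ ρ₁ : Matrix (Fin n) (Fin n) ℂ) : ℝ :=
  traceNorm (ρ₀ - ρ₁) / 2

/-- Uhlmann fidelity `F(ρ₀,ρ₁) = Tr √(√ρ₀ ρ₁ √ρ₀)`. -/
noncomputable def fidelity {n : ℕ} {ρ₀ ρ₁ : Matrix (Fin n) (Fin n) ℂ}
    (h₀ : ρ₀.PosSemidef) (h₁ : ρ₁.PosSemidef) : ℝ :=
  ((psdSqrt (show (psdSqrt h₀ * ρ₁ * psdSqrt h₀).PosSemidef by
      have := h₁.mul_mul_conjTranspose_same (psdSqrt h₀)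
      rwa [(psdSqrt_posSemidef h₀).isHermitian.eq] at this)).trace).re

/-- Outer product `|v⟩⟨v|`. -/
noncomputable def outer {n : ℕ} (v : Fin n → ℂ) : Matrix (Fin n) (Fin n) ℂ :=
  Matrix.vecMulVec v (star v)

variable {n : ℕ} {A : Matrix (Fin n) (Fin n) ℂ}

noncomputable def fc (f : ℝ → ℝ) (hA : A.IsHermitian) : Matrix (Fin n) (Fin n) ℂ :=
  (hA.eigenvectorUnitary : Matrix (Fin n) (Fin n) ℂ) *
    diagonal (Complex.ofReal ∘ f ∘ hA.eigenvalues) *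
    star (hA.eigenvectorUnitary : Matrix (Fin n) (Fin n) ℂ)

lemma fc_sqrt (hA : A.PosSemidef) : psdSqrt hA = fc Real.sqrt hA.1 := rfl

lemma fc_id (hA : A.IsHermitian) : fc (fun x => x) hA = A := by
  have hA' : IsSelfAdjoint A := hA
  rw [show fc (fun x => x) hA = cfc (fun x : ℝ => x) A by rw [hA.cfc_eq]; rfl]
  exact cfc_id' ℝ A

lemma fc_congr (hA : A.IsHermitian) (f g : ℝ → ℝ)
    (h : ∀ i, f (hA.eigenvalues i) = g (hA.eigenvalues i)) : fc f hA = fc g hA := by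
  unfold fc
  have : (Complex.ofReal ∘ f ∘ hA.eigenvalues) = (Complex.ofReal ∘ g ∘ hA.eigenvalues) := by
    funext i; simp [h i]
  rw [this]

lemma fc_mul_fc (hA : A.IsHermitian) (f g h : ℝ → ℝ)
    (hfg : ∀ i, f (hA.eigenvalues i) * g (hA.eigenvalues i) = h (hA.eigenvalues i)) :
    fc f hA * fc g hA = fc h hA := by
  unfold fc
  rw [mul_assoc, mul_assoc, ← mul_assoc (star _) _, ← mul_assoc (star _)]
  rw [show (star (hA.eigenvectorUnitary : Matrix (Fin n) (Fin n) ℂ)) *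
      (hA.eigenvectorUnitary : Matrix (Fin n) (Fin n) ℂ) = 1 from
    Unitary.coe_star_mul_self _]
  rw [one_mul, ← mul_assoc _ (diagonal _) (star _), diagonal_mul_diagonal, ← mul_assoc]
  have : (fun i => (Complex.ofReal ∘ f ∘ hA.eigenvalues) i * (Complex.ofReal ∘ g ∘ hA.eigenvalues) i)
      = Complex.ofReal ∘ h ∘ hA.eigenvalues := by
    funext i; simpa using congrArg Complex.ofReal (hfg i)
  rw [this]

lemma fc_one (hA : A.IsHermitian) : fc (fun _ => 1) hA = 1 := by
  unfold fc
  have : diagonal (Complex.ofReal ∘ (fun _ : ℝ => (1:ℝ)) ∘ hA.eigenvalues)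
      = (1 : Matrix (Fin n) (Fin n) ℂ) := by
    rw [← diagonal_one]
    congr 1
  rw [this, mul_one]
  exact Unitary.coe_mul_star_self _

lemma fc_conjTranspose (hA : A.IsHermitian) (f : ℝ → ℝ) : (fc f hA)ᴴ = fc f hA := by
  unfold fc
  rw [conjTranspose_mul, conjTranspose_mul, diagonal_conjTranspose]
  rw [← star_eq_conjTranspose, ← star_eq_conjTranspose, star_star, mul_assoc]
  have : star (Complex.ofReal ∘ f ∘ hA.eigenvalues) = Complex.ofReal ∘ f ∘ hA.eigenvalues := by
    funext i; simp [Pi.star_def]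
  rw [this]

lemma fc_isHermitian (hA : A.IsHermitian) (f : ℝ → ℝ) : (fc f hA).IsHermitian :=
  fc_conjTranspose hA f

lemma fc_posSemidef (hA : A.IsHermitian) (f : ℝ → ℝ)
    (hf : ∀ i, 0 ≤ f (hA.eigenvalues i)) : (fc f hA).PosSemidef := by
  have hd : (diagonal (Complex.ofReal ∘ f ∘ hA.eigenvalues)).PosSemidef := by
    rw [posSemidef_diagonal_iff]
    intro i
    simpa using Complex.zero_le_real.mpr (hf i)
  have := hd.mul_mul_conjTranspose_same (hA.eigenvectorUnitary : Matrix (Fin n) (Fin n) ℂ)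
  rwa [← star_eq_conjTranspose] at this

lemma fc_trace (hA : A.IsHermitian) (f : ℝ → ℝ) :
    (fc f hA).trace = Complex.ofReal (∑ i, f (hA.eigenvalues i)) := by
  unfold fc
  rw [trace_mul_cycle, Unitary.coe_star_mul_self, one_mul, trace_diagonal]
  push_cast
  rfl

lemma fc_sub (hA : A.IsHermitian) (f g : ℝ → ℝ) :
    fc f hA - fc g hA = fc (fun x => f x - g x) hA := by
  unfold fc
  rw [← sub_mul, ← mul_sub, diagonal_sub]
  have : (fun i => (Complex.ofReal ∘ f ∘ hA.eigenvalues) i - (Complex.ofReal ∘ g ∘ hA.eigenvalues) i)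
      = Complex.ofReal ∘ (fun x => f x - g x) ∘ hA.eigenvalues := by
    funext i; simp
  rw [this]

lemma one_sub_fc (hA : A.IsHermitian) (f : ℝ → ℝ) :
    1 - fc f hA = fc (fun x => 1 - f x) hA := by
  rw [← fc_one hA, fc_sub]

lemma psdSqrt_eq_cfc (hA : A.PosSemidef) : psdSqrt hA = cfc Real.sqrt A := by
  rw [hA.1.cfc_eq]; rfl

lemma psd_eq_sqrt_of_sq_eq {B C : Matrix (Fin n) (Fin n) ℂ} (hB : B.PosSemidef) (hC : C.PosSemidef)
    (h : B ^ 2 = C) : B = psdSqrt hC := by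
  have hB1 : IsSelfAdjoint B := hB.1
  rw [psdSqrt_eq_cfc, ← h, ← cfc_comp_pow (fun x => Real.sqrt x) 2 B]
  conv_lhs => rw [← cfc_id' ℝ B]
  apply cfc_congr
  intro x hx
  obtain ⟨i, rfl⟩ := hB.1.spectrum_real_eq_range_eigenvalues ▸ hx
  simp [Real.sqrt_sq (hB.eigenvalues_nonneg i)]

lemma psdSqrt_mul_self (hA : A.PosSemidef) : psdSqrt hA * psdSqrt hA = A := by
  rw [fc_sqrt, fc_mul_fc hA.1 _ _ (fun x => x)
    (fun i => Real.mul_self_sqrt (hA.eigenvalues_nonneg i)), fc_id]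

noncomputable def nsq (v : Fin n → ℂ) : ℝ := ∑ i, Complex.normSq (v i)

lemma nsq_nonneg (v : Fin n → ℂ) : 0 ≤ nsq v :=
  Finset.sum_nonneg fun i _ => Complex.normSq_nonneg _

lemma dot_self_eq (v : Fin n → ℂ) : star v ⬝ᵥ v = Complex.ofReal (nsq v) := by
  simp only [dotProduct, nsq, Pi.star_apply]
  push_cast
  congr 1
  funext i
  exact (Complex.normSq_eq_conj_mul_self).symm

/-- Cauchy–Schwarz for the dot product. -/
lemma dot_cs (v w : Fin n → ℂ) :
    ‖star v ⬝ᵥ w‖ ≤ Real.sqrt (nsq v) * Real.sqrt (nsq w) := by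
  have h1 : ‖star v ⬝ᵥ w‖ ≤ ∑ i, ‖v i‖ * ‖w i‖ := by
    refine (norm_sum_le _ _).trans ?_
    refine Finset.sum_le_sum fun i _ => ?_
    simp [Pi.star_apply, norm_mul]
  refine h1.trans ?_
  have := Real.sum_mul_le_sqrt_mul_sqrt Finset.univ
    (fun i => ‖v i‖) (fun i => ‖w i‖)
  refine this.trans_eq ?_
  congr 1 <;> · congr 1; unfold nsq; congr 1; funext i; rw [Complex.sq_norm]

lemma psd_diag_re_nonneg {M : Matrix (Fin n) (Fin n) ℂ} (hM : M.PosSemidef) (i : Fin n) :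
    0 ≤ (M i i).re := by
  have h := hM.dotProduct_mulVec_nonneg (Pi.single i 1)
  have : star (Pi.single i 1 : Fin n → ℂ) ⬝ᵥ (M *ᵥ Pi.single i 1) = M i i := by
    simp [mulVec_single, dotProduct, Pi.single_apply, Finset.sum_ite_eq', star_eq_iff_star_eq]
  rw [this] at h
  exact (Complex.le_def.mp h).1

lemma psd_diag_im_zero {M : Matrix (Fin n) (Fin n) ℂ} (hM : M.PosSemidef) (i : Fin n) :
    (M i i).im = 0 := by
  have := hM.1
  have h := congrFun (congrFun this i) i
  have h2 : -(M i i).im = (M i i).im := by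
    simpa [conjTranspose_apply, Complex.ext_iff] using congrArg Complex.im h
  linarith

lemma psd_trace_re_nonneg {M : Matrix (Fin n) (Fin n) ℂ} (hM : M.PosSemidef) :
    0 ≤ M.trace.re := by
  rw [trace, Complex.re_sum]
  exact Finset.sum_nonneg fun i _ => psd_diag_re_nonneg hM i

/-- Frobenius norm squared. -/
lemma trace_conjTranspose_mul_self_re (X : Matrix (Fin n) (Fin n) ℂ) :
    (Xᴴ * X).trace.re = ∑ j, ∑ i, Complex.normSq (X i j) := by
  rw [trace, Complex.re_sum]
  congr 1
  funext j
  rw [diag, mul_apply, Complex.re_sum]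
  congr 1
  funext i
  rw [conjTranspose_apply]
  simp [Complex.normSq_apply, Complex.mul_re]

/-- Cauchy–Schwarz for the Frobenius inner product. -/
lemma trace_cs (A B : Matrix (Fin n) (Fin n) ℂ) :
    ‖(Aᴴ * B).trace‖ ≤
      Real.sqrt ((Aᴴ * A).trace.re) * Real.sqrt ((Bᴴ * B).trace.re) := by
  have habs : ‖(Aᴴ * B).trace‖ ≤
      ∑ j, ∑ i, ‖A i j‖ * ‖B i j‖ := by
    rw [trace]
    refine (norm_sum_le _ _).trans ?_
    refine Finset.sum_le_sum fun j _ => ?_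
    rw [diag, mul_apply]
    refine (norm_sum_le _ _).trans ?_
    refine Finset.sum_le_sum fun i _ => ?_
    rw [conjTranspose_apply]
    simp [norm_mul]
  refine habs.trans ?_
  rw [trace_conjTranspose_mul_self_re A, trace_conjTranspose_mul_self_re B,
    ← Finset.sum_product', ← Finset.sum_product', ← Finset.sum_product']
  have := Real.sum_mul_le_sqrt_mul_sqrt (Finset.univ ×ˢ Finset.univ)
    (fun p : Fin n × Fin n => ‖A p.2 p.1‖)
    (fun p : Fin n × Fin n => ‖B p.2 p.1‖)
  refine this.trans_eq ?_
  congr 1 <;> · congr 1; refine Finset.sum_congr rfl fun p _ => Complex.sq_norm _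

lemma sqrt_congr {A B : Matrix (Fin n) (Fin n) ℂ} (hA : A.PosSemidef) (hB : B.PosSemidef)
    (h : A = B) : (psdSqrt hA) = (psdSqrt hB) := by subst h; rfl

lemma dot_conj_sq (M : Matrix (Fin n) (Fin n) ℂ) (v : Fin n → ℂ) :
    star v ⬝ᵥ ((Mᴴ * M) *ᵥ v) = Complex.ofReal (nsq (M *ᵥ v)) := by
  rw [← mulVec_mulVec, dotProduct_mulVec, ← star_mulVec, dot_self_eq]

lemma nsq_mulVec_le {M : Matrix (Fin n) (Fin n) ℂ} (h : (1 - Mᴴ * M).PosSemidef)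
    (v : Fin n → ℂ) : nsq (M *ᵥ v) ≤ nsq v := by
  have h2 := h.dotProduct_mulVec_nonneg v
  rw [sub_mulVec, one_mulVec, dotProduct_sub, dot_conj_sq, dot_self_eq] at h2
  rw [← Complex.ofReal_sub] at h2
  have := Complex.zero_le_real.mp h2
  linarith

lemma contract_flip {X : Matrix (Fin n) (Fin n) ℂ} (hX : (1 - Xᴴ * X).PosSemidef) :
    (1 - X * Xᴴ).PosSemidef := by
  refine PosSemidef.of_dotProduct_mulVec_nonneg ?_ ?_
  · exact isHermitian_one.sub (isHermitian_mul_conjTranspose_self X)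
  intro v
  have key : star v ⬝ᵥ ((X * Xᴴ) *ᵥ v) = Complex.ofReal (nsq (Xᴴ *ᵥ v)) := by
    have := dot_conj_sq Xᴴ v
    rwa [conjTranspose_conjTranspose] at this
  set u : Fin n → ℂ := Xᴴ *ᵥ v with hu
  -- nsq u ≤ nsq v
  have hdot : star v ⬝ᵥ (X *ᵥ u) = Complex.ofReal (nsq u) := by
    rw [hu, mulVec_mulVec]
    exact key
  have hle : nsq u ≤ Real.sqrt (nsq v) * Real.sqrt (nsq u) := by
    have h1 : ‖star v ⬝ᵥ (X *ᵥ u)‖ ≤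
        Real.sqrt (nsq v) * Real.sqrt (nsq (X *ᵥ u)) := dot_cs v (X *ᵥ u)
    rw [hdot] at h1
    have h2 : ‖Complex.ofReal (nsq u)‖ = nsq u := by
      rw [Complex.norm_of_nonneg (nsq_nonneg u)]
    rw [h2] at h1
    refine h1.trans ?_
    have := Real.sqrt_le_sqrt (nsq_mulVec_le hX u)
    exact mul_le_mul_of_nonneg_left this (Real.sqrt_nonneg _)
  have huv : nsq u ≤ nsq v := by
    have hsq : nsq u * nsq u ≤ nsq v * nsq u := by
      have h3 : (Real.sqrt (nsq v) * Real.sqrt (nsq u))^2 = nsq v * nsq u := by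
        rw [mul_pow, Real.sq_sqrt (nsq_nonneg u), Real.sq_sqrt (nsq_nonneg v)]
      nlinarith [nsq_nonneg u, nsq_nonneg v, Real.sqrt_nonneg (nsq u), Real.sqrt_nonneg (nsq v)]
    rcases eq_or_lt_of_le (nsq_nonneg u) with h0 | h0
    · rw [← h0]; exact nsq_nonneg v
    · exact le_of_mul_le_mul_right hsq h0
  rw [sub_mulVec, one_mulVec, dotProduct_sub, key, dot_self_eq, ← Complex.ofReal_sub]
  exact Complex.zero_le_real.mpr (by linarith)

lemma trace_mul_le_of_le_one {B C : Matrix (Fin n) (Fin n) ℂ} (hB : B.PosSemidef)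
    (hC1 : (1 - C).PosSemidef) : (B * C).trace.re ≤ B.trace.re := by
  set sb := (psdSqrt hB) with hsb
  have hsbh : sbᴴ = sb := (psdSqrt_posSemidef hB).1
  have hBe : B = sb * sb := (psdSqrt_mul_self hB).symm
  have hpsd : (sb * (1 - C) * sb).PosSemidef := by
    have := hC1.mul_mul_conjTranspose_same sb
    rwa [hsbh] at this
  have htr : (sb * (1 - C) * sb).trace = B.trace - (B * C).trace := by
    rw [mul_sub, mul_one, sub_mul, trace_sub, trace_mul_cycle (sb) C sb]
    rw [hBe]
  have := psd_trace_re_nonneg hpsd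
  rw [htr] at this
  rw [Complex.sub_re] at this
  linarith

lemma trace_diagonal_mul (d : Fin n → ℂ) (N : Matrix (Fin n) (Fin n) ℂ) :
    (diagonal d * N).trace = ∑ i, d i * N i i := by
  rw [trace]
  congr 1
  funext i
  rw [diag, mul_apply]
  rw [Finset.sum_eq_single i (fun b _ hb => by simp [diagonal_apply_ne' _ hb]) (by simp)]
  rw [diagonal_apply_eq]

lemma fc_mul_trace {A : Matrix (Fin n) (Fin n) ℂ} (hA : A.IsHermitian) (f : ℝ → ℝ)
    (K : Matrix (Fin n) (Fin n) ℂ) :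
    (fc f hA * K).trace = ∑ i, (f (hA.eigenvalues i) : ℂ) *
      ((star (hA.eigenvectorUnitary : Matrix (Fin n) (Fin n) ℂ) * K *
        (hA.eigenvectorUnitary : Matrix (Fin n) (Fin n) ℂ)) i i) := by
  unfold fc
  rw [mul_assoc, mul_assoc, trace_mul_comm, mul_assoc, trace_diagonal_mul]
  rfl

lemma traceNorm_hermitian {H : Matrix (Fin n) (Fin n) ℂ} (hH : H.IsHermitian) :
    traceNorm H = ∑ i, |hH.eigenvalues i| := by
  have habs : (fc (fun x => |x|) hH).PosSemidef :=
    fc_posSemidef hH _ (fun i => abs_nonneg _)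
  have hsq : (fc (fun x => |x|) hH) ^ 2 = Hᴴ * H := by
    rw [pow_two, fc_mul_fc hH _ _ (fun x => x * x) (fun i => abs_mul_abs_self _)]
    rw [hH.eq]
    conv_rhs => rw [← fc_id hH]
    rw [fc_mul_fc hH _ _ (fun x => x * x) (fun i => rfl)]
  have := psd_eq_sqrt_of_sq_eq habs (posSemidef_conjTranspose_mul_self H) hsq
  unfold traceNorm
  rw [← this, fc_trace]
  simp

lemma traceNorm_nonneg (M : Matrix (Fin n) (Fin n) ℂ) : 0 ≤ traceNorm M :=
  psd_trace_re_nonneg (psdSqrt_posSemidef (posSemidef_conjTranspose_mul_self M))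

lemma entry_conj_dot (U K : Matrix (Fin n) (Fin n) ℂ) (i : Fin n) :
    (star U * K * U) i i = star (fun j => U j i) ⬝ᵥ (K *ᵥ fun j => U j i) := by
  simp only [mul_apply, dotProduct, mulVec, Pi.star_apply, Matrix.star_apply,
    Finset.sum_mul, Finset.mul_sum]
  rw [Finset.sum_comm]
  congr 1
  funext j
  congr 1
  funext k
  ring

lemma col_nsq_one {U : Matrix (Fin n) (Fin n) ℂ} (hU : U ∈ Matrix.unitaryGroup (Fin n) ℂ)
    (i : Fin n) : nsq (fun j => U j i) = 1 := by
  have h1 : (star U * U) = 1 := (Matrix.mem_unitaryGroup_iff').mp hU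
  have h2 := entry_conj_dot U 1 i
  rw [mul_one, h1, one_mulVec, dot_self_eq] at h2
  have : ((1 : Matrix (Fin n) (Fin n) ℂ) i i) = 1 := by simp
  rw [this] at h2
  have := congrArg Complex.re h2
  simpa using this.symm

lemma diag_entry_abs_le_one {U S : Matrix (Fin n) (Fin n) ℂ}
    (hU : U ∈ Matrix.unitaryGroup (Fin n) ℂ) (hS : (1 - Sᴴ * S).PosSemidef) (i : Fin n) :
    ‖(star U * S * U) i i‖ ≤ 1 := by
  rw [entry_conj_dot]
  refine (dot_cs _ _).trans ?_
  have h1 : nsq (fun j => U j i) = 1 := col_nsq_one hU i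
  have h2 : nsq (S *ᵥ fun j => U j i) ≤ 1 := by
    have := nsq_mulVec_le hS (fun j => U j i)
    rwa [h1] at this
  rw [h1, Real.sqrt_one, one_mul]
  calc Real.sqrt (nsq (S *ᵥ fun j => U j i)) ≤ Real.sqrt 1 := Real.sqrt_le_sqrt h2
  _ = 1 := Real.sqrt_one

/-- dual bound: `Re Tr (H S) ≤ ‖H‖₁` for Hermitian `H` and contraction `S`. -/
lemma trace_hermitian_mul_contraction_le {H S : Matrix (Fin n) (Fin n) ℂ}
    (hH : H.IsHermitian) (hS : (1 - Sᴴ * S).PosSemidef) :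
    (H * S).trace.re ≤ traceNorm H := by
  conv_lhs => rw [← fc_id hH]
  rw [fc_mul_trace hH _ S, Complex.re_sum, traceNorm_hermitian hH]
  refine Finset.sum_le_sum fun i _ => ?_
  set d := (star (hH.eigenvectorUnitary : Matrix (Fin n) (Fin n) ℂ) * S *
      (hH.eigenvectorUnitary : Matrix (Fin n) (Fin n) ℂ)) i i with hd
  have hdle : ‖d‖ ≤ 1 := diag_entry_abs_le_one (hH.eigenvectorUnitary).2 hS i
  have : ((hH.eigenvalues i : ℂ) * d).re = hH.eigenvalues i * d.re := by
    simp [Complex.re_ofReal_mul]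
  rw [this]
  calc hH.eigenvalues i * d.re ≤ |hH.eigenvalues i * d.re| := le_abs_self _
  _ = |hH.eigenvalues i| * |d.re| := abs_mul _ _
  _ ≤ |hH.eigenvalues i| * 1 := by
      refine mul_le_mul_of_nonneg_left ?_ (abs_nonneg _)
      exact (Complex.abs_re_le_norm d).trans hdle
  _ = |hH.eigenvalues i| := mul_one _

lemma fc_mul_base {A : Matrix (Fin n) (Fin n) ℂ} (hA : A.IsHermitian) (f h : ℝ → ℝ)
    (hfh : ∀ i, f (hA.eigenvalues i) * hA.eigenvalues i = h (hA.eigenvalues i)) :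
    fc f hA * A = fc h hA := by
  have e1 : fc f hA * A = fc f hA * fc (fun x => x) hA := by rw [fc_id]
  rw [e1, fc_mul_fc hA _ _ h hfh]

lemma base_mul_fc {A : Matrix (Fin n) (Fin n) ℂ} (hA : A.IsHermitian) (f h : ℝ → ℝ)
    (hfh : ∀ i, hA.eigenvalues i * f (hA.eigenvalues i) = h (hA.eigenvalues i)) :
    A * fc f hA = fc h hA := by
  have e1 : A * fc f hA = fc (fun x => x) hA * fc f hA := by rw [fc_id]
  rw [e1, fc_mul_fc hA _ _ h hfh]

noncomputable def gre : ℝ → ℝ := fun x => if x = 0 then 0 else (Real.sqrt x)⁻¹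
noncomputable def qf : ℝ → ℝ := fun x => if x = 0 then 0 else 1

lemma gre_mul_self {x : ℝ} (hx : 0 ≤ x) : gre x * x = Real.sqrt x := by
  unfold gre
  rcases eq_or_ne x 0 with h0 | h0
  · simp [h0]
  · have hpos : 0 < x := lt_of_le_of_ne hx (Ne.symm h0)
    have hs : Real.sqrt x ≠ 0 := ne_of_gt (Real.sqrt_pos.mpr hpos)
    rw [if_neg h0]
    field_simp
    rw [Real.sq_sqrt hx]

lemma gre_mul_sqrt {x : ℝ} (hx : 0 ≤ x) : Real.sqrt x * gre x = qf x := by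
  unfold gre qf
  rcases eq_or_ne x 0 with h0 | h0
  · simp [h0]
  · have hpos : 0 < x := lt_of_le_of_ne hx (Ne.symm h0)
    have hs : Real.sqrt x ≠ 0 := ne_of_gt (Real.sqrt_pos.mpr hpos)
    rw [if_neg h0, if_neg h0]
    exact mul_inv_cancel₀ hs

noncomputable def polarW (M : Matrix (Fin n) (Fin n) ℂ) : Matrix (Fin n) (Fin n) ℂ :=
  M * fc gre (posSemidef_conjTranspose_mul_self M).1

lemma matrix_eq_zero_of_trace_conj_self (X : Matrix (Fin n) (Fin n) ℂ)
    (h : (Xᴴ * X).trace.re = 0) : X = 0 := by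
  rw [trace_conjTranspose_mul_self_re] at h
  ext i j
  have h2 := (Finset.sum_eq_zero_iff_of_nonneg (fun j _ =>
    Finset.sum_nonneg (fun i _ => Complex.normSq_nonneg (X i j)))).mp h j (Finset.mem_univ j)
  have h3 := (Finset.sum_eq_zero_iff_of_nonneg (fun i _ =>
    Complex.normSq_nonneg (X i j))).mp h2 i (Finset.mem_univ i)
  simpa using Complex.normSq_eq_zero.mp h3

section polar

variable (M : Matrix (Fin n) (Fin n) ℂ)

lemma polarW_conj_mul :
    (polarW M)ᴴ * polarW M = fc qf (posSemidef_conjTranspose_mul_self M).1 := by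
  set hT := posSemidef_conjTranspose_mul_self M
  have hnn := hT.eigenvalues_nonneg
  unfold polarW
  rw [conjTranspose_mul, fc_conjTranspose, mul_assoc, ← mul_assoc Mᴴ M _, ← mul_assoc]
  rw [fc_mul_base hT.1 gre (fun x => gre x * x) (fun i => rfl)]
  rw [fc_mul_fc hT.1 _ gre qf ?_]
  intro i
  rw [gre_mul_self (hnn i), gre_mul_sqrt (hnn i)]

lemma polarW_contraction : (1 - (polarW M)ᴴ * polarW M).PosSemidef := by
  rw [polarW_conj_mul, one_sub_fc]
  refine fc_posSemidef _ _ fun i => ?_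
  unfold qf
  split <;> norm_num

lemma polarW_conj_mul_self :
    (polarW M)ᴴ * M = psdSqrt (posSemidef_conjTranspose_mul_self M) := by
  set hT := posSemidef_conjTranspose_mul_self M
  have hnn := hT.eigenvalues_nonneg
  unfold polarW
  rw [conjTranspose_mul, fc_conjTranspose, mul_assoc]
  rw [fc_mul_base hT.1 gre Real.sqrt (fun i => gre_mul_self (hnn i)), fc_sqrt]

lemma mul_fc_qf_eq_self :
    M * fc qf (posSemidef_conjTranspose_mul_self M).1 = M := by
  set hT := posSemidef_conjTranspose_mul_self M
  set Q := fc qf hT.1 with hQ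
  have hQh : Qᴴ = Q := fc_conjTranspose _ _
  have hzero : ((M - M * Q)ᴴ * (M - M * Q)).trace.re = 0 := by
    have hexp : (M - M * Q)ᴴ * (M - M * Q)
        = (1 - Q)ᴴ * (Mᴴ * M) * (1 - Q) := by
      rw [conjTranspose_sub, conjTranspose_mul, hQh, conjTranspose_sub, conjTranspose_one, hQh]
      noncomm_ring
    rw [hexp, conjTranspose_sub, conjTranspose_one, hQh, one_sub_fc]
    rw [fc_mul_base hT.1 _ (fun x => (1 - qf x) * x) (fun i => rfl),
      fc_mul_fc hT.1 _ _ (fun x => 0) ?_]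
    · rw [fc_trace]
      simp
    · intro i
      unfold qf
      rcases eq_or_ne (hT.1.eigenvalues i) 0 with h0 | h0 <;> simp [h0]
  have h2 : M - M * Q = 0 := matrix_eq_zero_of_trace_conj_self _ hzero
  rw [sub_eq_zero] at h2
  exact h2.symm

lemma polar_decomp : polarW M * psdSqrt (posSemidef_conjTranspose_mul_self M) = M := by
  set hT := posSemidef_conjTranspose_mul_self M
  have hnn := hT.eigenvalues_nonneg
  unfold polarW
  rw [fc_sqrt, mul_assoc, fc_mul_fc hT.1 gre Real.sqrt qf
    (fun i => by rw [mul_comm]; exact gre_mul_sqrt (hnn i))]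
  exact mul_fc_qf_eq_self M

/-- `Re Tr M ≤ ‖M‖₁`. -/
lemma re_trace_le_traceNorm : M.trace.re ≤ traceNorm M := by
  set hT := posSemidef_conjTranspose_mul_self M
  have hnn := hT.eigenvalues_nonneg
  set W := polarW M with hW
  set R := fc (fun x => Real.sqrt (Real.sqrt x)) hT.1 with hR
  have hRR : R * R = fc Real.sqrt hT.1 :=
    fc_mul_fc hT.1 _ _ Real.sqrt (fun i => Real.mul_self_sqrt (Real.sqrt_nonneg _))
  have hMeq : M = W * (R * R) := by
    rw [hRR, ← fc_sqrt]
    exact (polar_decomp M).symm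
  have htr : M.trace = (Rᴴ * (W * R)).trace := by
    conv_lhs => rw [hMeq]
    rw [fc_conjTranspose, ← mul_assoc, ← mul_assoc, trace_mul_cycle]
  -- Cauchy-Schwarz
  have hcs := trace_cs R (W * R)
  rw [← htr] at hcs
  have h1 : (Rᴴ * R).trace.re = traceNorm M := by
    rw [fc_conjTranspose, hRR, ← fc_sqrt]
    rfl
  have h2 : ((W * R)ᴴ * (W * R)).trace.re = traceNorm M := by
    have : (W * R)ᴴ * (W * R) = Rᴴ * ((Wᴴ * W) * R) := by
      rw [conjTranspose_mul]
      noncomm_ring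
    rw [this, polarW_conj_mul, fc_conjTranspose]
    rw [fc_mul_fc hT.1 qf _ (fun x => qf x * Real.sqrt (Real.sqrt x)) (fun i => rfl)]
    rw [fc_mul_fc hT.1 _ _ Real.sqrt ?_]
    · rw [← fc_sqrt]; rfl
    intro i
    unfold qf
    rcases eq_or_ne (hT.1.eigenvalues i) 0 with h0 | h0
    · simp [h0]
    · have : Real.sqrt (Real.sqrt (hT.1.eigenvalues i)) *
          Real.sqrt (Real.sqrt (hT.1.eigenvalues i)) = Real.sqrt (hT.1.eigenvalues i) :=
        Real.mul_self_sqrt (Real.sqrt_nonneg _)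
      simp [h0, this]
  rw [h1, h2] at hcs
  have habs : M.trace.re ≤ ‖M.trace‖ := Complex.re_le_norm _
  refine habs.trans (hcs.trans ?_)
  rw [Real.mul_self_sqrt (traceNorm_nonneg M)]

end polar

section fid

variable {ρ₀ ρ₁ : Matrix (Fin n) (Fin n) ℂ}

lemma fidelity_congr (h₀ : ρ₀.PosSemidef) (h₁ : ρ₁.PosSemidef)
    {X : Matrix (Fin n) (Fin n) ℂ} (hX : X.PosSemidef)
    (heq : (psdSqrt h₀) * ρ₁ * (psdSqrt h₀) = X) :
    fidelity h₀ h₁ = ((psdSqrt hX).trace).re := by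
  unfold fidelity
  exact congrArg (fun m : Matrix (Fin n) (Fin n) ℂ => m.trace.re) (sqrt_congr _ _ heq)

lemma fidelity_eq_traceNorm (h₀ : ρ₀.PosSemidef) (h₁ : ρ₁.PosSemidef) :
    fidelity h₀ h₁ = traceNorm ((psdSqrt h₁) * (psdSqrt h₀)) := by
  have heq : (psdSqrt h₀) * ρ₁ * (psdSqrt h₀) = ((psdSqrt h₁) * (psdSqrt h₀))ᴴ * ((psdSqrt h₁) * (psdSqrt h₀)) := by
    rw [conjTranspose_mul, (psdSqrt_posSemidef h₀).1, (psdSqrt_posSemidef h₁).1]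
    rw [show (psdSqrt h₀) * (psdSqrt h₁) * ((psdSqrt h₁) * (psdSqrt h₀))
        = (psdSqrt h₀) * ((psdSqrt h₁) * (psdSqrt h₁)) * (psdSqrt h₀) by noncomm_ring, psdSqrt_mul_self h₁]
  exact fidelity_congr h₀ h₁ (posSemidef_conjTranspose_mul_self _) heq

lemma fidelity_nonneg (h₀ : ρ₀.PosSemidef) (h₁ : ρ₁.PosSemidef) : 0 ≤ fidelity h₀ h₁ := by
  rw [fidelity_eq_traceNorm]
  exact traceNorm_nonneg _

lemma trace_proj_mul_nonneg {E ρ : Matrix (Fin n) (Fin n) ℂ} (hEh : Eᴴ = E)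
    (hEE : E * E = E) (hρ : ρ.PosSemidef) : 0 ≤ ((E * ρ).trace).re := by
  have h1 : (E * ρ * Eᴴ).PosSemidef := hρ.mul_mul_conjTranspose_same E
  rw [hEh] at h1
  have h2 : (E * ρ * E).trace = (E * ρ).trace := by
    rw [trace_mul_cycle, hEE]
  have := psd_trace_re_nonneg h1
  rwa [h2] at this

/-- the key Cauchy-Schwarz estimate for the fidelity measurement bound -/
lemma fid_term_bound {a b E W : Matrix (Fin n) (Fin n) ℂ}
    (hah : aᴴ = a) (hbh : bᴴ = b) (hEh : Eᴴ = E) (hEE : E * E = E)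
    (hE : E.PosSemidef) (hWc : (1 - W * Wᴴ).PosSemidef) :
    ‖((Wᴴ * b) * (E * a)).trace‖ ≤
      Real.sqrt (((E * (b * b)).trace).re) * Real.sqrt (((E * (a * a)).trace).re) := by
  have key : (Wᴴ * b) * (E * a) = (E * b * W)ᴴ * (E * a) := by
    rw [conjTranspose_mul, conjTranspose_mul, hbh, hEh]
    conv_lhs => rw [← hEE]
    noncomm_ring
  rw [key]
  refine (trace_cs _ _).trans ?_
  have hXX : (((E * b * W)ᴴ * (E * b * W)).trace).re ≤ ((E * (b * b)).trace).re := by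
    have e1 : (E * b * W)ᴴ * (E * b * W) = Wᴴ * ((b * E * b) * W) := by
      rw [conjTranspose_mul, conjTranspose_mul, hbh, hEh]
      conv_rhs => rw [← hEE]
      noncomm_ring
    have t1 : ((E * b * W)ᴴ * (E * b * W)).trace = ((b * E * b) * (W * Wᴴ)).trace := by
      rw [e1, trace_mul_comm, mul_assoc]
    rw [t1]
    have hpsd : (b * E * b).PosSemidef := by
      have := hE.mul_mul_conjTranspose_same b
      rwa [hbh] at this
    have e3 : ((b * E * b) * (W * Wᴴ)).trace.re ≤ (b * E * b).trace.re :=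
      trace_mul_le_of_le_one hpsd hWc
    have e4 : (b * E * b).trace = (E * (b * b)).trace := by
      rw [trace_mul_cycle, trace_mul_comm]
    rw [e4] at e3
    exact e3
  have hYY : (((E * a)ᴴ * (E * a)).trace).re = ((E * (a * a)).trace).re := by
    have e1 : (E * a)ᴴ * (E * a) = a * E * a := by
      rw [conjTranspose_mul, hah, hEh]
      conv_rhs => rw [← hEE]
      noncomm_ring
    rw [e1, trace_mul_cycle, trace_mul_comm]
  rw [hYY]
  refine mul_le_mul_of_nonneg_right ?_ (Real.sqrt_nonneg _)
  exact Real.sqrt_le_sqrt hXX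

end fid

section main

variable {ρ₀ ρ₁ : Matrix (Fin n) (Fin n) ℂ}

lemma lower_bound (h₀ : ρ₀.PosSemidef) (h₁ : ρ₁.PosSemidef)
    (ht₀ : ρ₀.trace = 1) (ht₁ : ρ₁.trace = 1) :
    1 - fidelity h₀ h₁ ≤ traceDist ρ₀ ρ₁ := by
  set a := (psdSqrt h₀) with ha
  set b := (psdSqrt h₁) with hb
  have hah : aᴴ = a := (psdSqrt_posSemidef h₀).1
  have hbh : bᴴ = b := (psdSqrt_posSemidef h₁).1
  have hC : (a - b).IsHermitian := IsHermitian.sub (psdSqrt_posSemidef h₀).1 (psdSqrt_posSemidef h₁).1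
  set s : ℝ → ℝ := fun x => if 0 ≤ x then 1 else -1 with hs
  have hs_sq : ∀ x : ℝ, s x * s x = 1 := by
    intro x
    by_cases hx : 0 ≤ x <;> simp [hs, hx]
  have hs_abs : ∀ x : ℝ, s x * x = |x| := by
    intro x
    by_cases hx : 0 ≤ x
    · simp [hs, hx, abs_of_nonneg hx]
    · simp [hs, hx, abs_of_neg (not_le.mp hx)]
  set S := fc s hC with hS
  have hScontr : (1 - Sᴴ * S).PosSemidef := by
    rw [hS, fc_conjTranspose, fc_mul_fc hC s s (fun _ => 1) (fun i => hs_sq _), fc_one, sub_self]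
    exact PosSemidef.zero
  have hΔh : (ρ₀ - ρ₁).IsHermitian := h₀.1.sub h₁.1
  -- step 1 : Tr(Δ S) ≤ ‖Δ‖₁
  have step1 : ((ρ₀ - ρ₁) * S).trace.re ≤ traceNorm (ρ₀ - ρ₁) :=
    trace_hermitian_mul_contraction_le hΔh hScontr
  -- step 2 : Tr(Δ S) = Tr(|C| D)  where D = a + b
  have hSC : S * (a - b) = fc (fun x => |x|) hC :=
    fc_mul_base hC s (fun x => |x|) (fun i => hs_abs _)
  have hCS : (a - b) * S = fc (fun x => |x|) hC :=
    base_mul_fc hC s (fun x => |x|) (fun i => by rw [mul_comm]; exact hs_abs _)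
  have hCD : (a - b) * (a + b) + (a + b) * (a - b) = (ρ₀ - ρ₁) + (ρ₀ - ρ₁) := by
    have e : (a - b) * (a + b) + (a + b) * (a - b) = (a * a - b * b) + (a * a - b * b) := by
      noncomm_ring
    rw [e, psdSqrt_mul_self h₀, psdSqrt_mul_self h₁]
  have step2 : ((ρ₀ - ρ₁) * S).trace = (fc (fun x => |x|) hC * (a + b)).trace := by
    have e1 : ((ρ₀ - ρ₁) * S).trace + ((ρ₀ - ρ₁) * S).trace
        = (fc (fun x => |x|) hC * (a + b)).trace + (fc (fun x => |x|) hC * (a + b)).trace := by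
      rw [← trace_add, ← add_mul, ← hCD, add_mul, trace_add]
      congr 1
      · rw [trace_mul_cycle, hSC]
      · rw [mul_assoc, hCS, trace_mul_comm]
    have := congrArg (fun z : ℂ => z / 2) e1
    field_simp at this
    exact this
  -- step 3 : Tr(|C| D) ≥ ∑ λᵢ²
  have step3 : (∑ i, (hC.eigenvalues i)^2) ≤ (fc (fun x => |x|) hC * (a + b)).trace.re := by
    rw [fc_mul_trace hC _ (a + b), Complex.re_sum]
    refine Finset.sum_le_sum fun i _ => ?_
    set U := (hC.eigenvectorUnitary : Matrix (Fin n) (Fin n) ℂ) with hU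
    set d := (star U * (a + b) * U) i i with hd
    have hdiagC : (star U * (a - b) * U) i i = Complex.ofReal (hC.eigenvalues i) := by
      have e : star U * (a - b) * U = diagonal (Complex.ofReal ∘ hC.eigenvalues) := by
        calc star U * (a - b) * U = star U * fc (fun x => x) hC * U := by rw [fc_id]
        _ = (star U * U) * diagonal (Complex.ofReal ∘ (fun x => x) ∘ hC.eigenvalues) *
              (star U * U) := by unfold fc; simp only [mul_assoc]; rfl
        _ = _ := by rw [hU, Unitary.coe_star_mul_self, one_mul, mul_one]; rfl
      rw [e]
      simp [diagonal_apply_eq]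
    -- D - C and D + C are psd
    have hDmC : ((a + b) - (a - b)).PosSemidef := by
      have e : (a + b) - (a - b) = b + b := by abel
      rw [e]; exact (psdSqrt_posSemidef h₁).add (psdSqrt_posSemidef h₁)
    have hDpC : ((a + b) + (a - b)).PosSemidef := by
      have e : (a + b) + (a - b) = a + a := by abel
      rw [e]; exact (psdSqrt_posSemidef h₀).add (psdSqrt_posSemidef h₀)
    have hconj1 : (star U * ((a + b) - (a - b)) * U).PosSemidef := by
      have := hDmC.conjTranspose_mul_mul_same U
      rwa [← star_eq_conjTranspose] at this
    have hconj2 : (star U * ((a + b) + (a - b)) * U).PosSemidef := by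
      have := hDpC.conjTranspose_mul_mul_same U
      rwa [← star_eq_conjTranspose] at this
    have h1 := psd_diag_re_nonneg hconj1 i
    have h2 := psd_diag_re_nonneg hconj2 i
    have e1 : star U * ((a + b) - (a - b)) * U
        = star U * (a + b) * U - star U * (a - b) * U := by noncomm_ring
    have e2 : star U * ((a + b) + (a - b)) * U
        = star U * (a + b) * U + star U * (a - b) * U := by noncomm_ring
    rw [e1] at h1
    rw [e2] at h2
    simp only [Matrix.sub_apply, Matrix.add_apply, Complex.sub_re, Complex.add_re, hdiagC, ← hd,
      Complex.ofReal_re] at h1 h2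
    -- h1 : 0 ≤ d.re - λᵢ ; h2 : 0 ≤ d.re + λᵢ
    have habs : |hC.eigenvalues i| ≤ d.re := abs_le.mpr ⟨by linarith, by linarith⟩
    rw [Complex.re_ofReal_mul]
    calc (hC.eigenvalues i)^2 = |hC.eigenvalues i| * |hC.eigenvalues i| := by
          rw [abs_mul_abs_self]; ring
    _ ≤ |hC.eigenvalues i| * d.re := mul_le_mul_of_nonneg_left habs (abs_nonneg _)
  -- step 4 : ∑ λᵢ² = Tr(C²) = 2 - 2 Re Tr(b a)
  have step4 : (∑ i, (hC.eigenvalues i)^2) = 2 - 2 * ((b * a).trace.re) := by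
    have hCC : (a - b) * (a - b) = fc (fun x => x * x) hC := by
      have e : (a - b) * (a - b) = (a - b) * fc (fun x => x) hC := by rw [fc_id]
      rw [e, base_mul_fc hC _ (fun x => x * x) (fun i => rfl)]
    have h1 : ((a - b) * (a - b)).trace.re = ∑ i, (hC.eigenvalues i)^2 := by
      rw [hCC, fc_trace]
      rw [Complex.ofReal_re]
      congr 1
      funext i
      ring
    have h2 : (a - b) * (a - b) = (a * a + b * b) - (a * b + b * a) := by noncomm_ring
    have h3 : ((a - b) * (a - b)).trace.re = 2 - 2 * ((b * a).trace.re) := by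
      rw [h2, trace_sub, trace_add, trace_add, psdSqrt_mul_self h₀, psdSqrt_mul_self h₁, ht₀, ht₁]
      rw [trace_mul_comm]
      simp only [Complex.sub_re, Complex.add_re, Complex.one_re]
      ring
    rw [← h1, h3]
  -- step 5 : Re Tr(b a) ≤ F
  have step5 : (b * a).trace.re ≤ fidelity h₀ h₁ := by
    rw [fidelity_eq_traceNorm h₀ h₁]
    exact re_trace_le_traceNorm (b * a)
  -- combine
  have hstep2re := congrArg Complex.re step2
  unfold traceDist
  linarith [step1, step3, step4, step5, hstep2re]

end main

section main2

lemma fvg_algebra {p0 q0 p1 q1 F : ℝ} (hp0nn : 0 ≤ p0) (hq0nn : 0 ≤ q0)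
    (hp1nn : 0 ≤ p1) (hq1nn : 0 ≤ q1)
    (hsp : p0 + p1 = 1) (hsq : q0 + q1 = 1) (hFnn : 0 ≤ F)
    (hFle : F ≤ Real.sqrt q0 * Real.sqrt p0 + Real.sqrt q1 * Real.sqrt p1) :
    p0 - q0 ≤ Real.sqrt (1 - F^2) := by
  rcases le_or_gt (p0 - q0) 0 with hneg | hpos
  · exact hneg.trans (Real.sqrt_nonneg _)
  set aa := Real.sqrt p0 with haa'
  set bb := Real.sqrt q0 with hbb'
  set cc := Real.sqrt p1 with hcc'
  set dd := Real.sqrt q1 with hdd'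
  have haa : aa^2 = p0 := Real.sq_sqrt hp0nn
  have hbb : bb^2 = q0 := Real.sq_sqrt hq0nn
  have hcc : cc^2 = p1 := Real.sq_sqrt hp1nn
  have hdd : dd^2 = q1 := Real.sq_sqrt hq1nn
  have h1 : (aa*dd - bb*cc)^2 + (bb*aa + dd*cc)^2 = 1 := by
    have e : (aa*dd - bb*cc)^2 + (bb*aa + dd*cc)^2
        = aa^2*dd^2 + bb^2*cc^2 + aa^2*bb^2 + cc^2*dd^2 := by ring
    rw [e, haa, hbb, hcc, hdd]
    linear_combination (q0 + q1) * hsp + hsq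
  have h2 : (aa*dd + bb*cc)^2 + (aa*bb - cc*dd)^2 = 1 := by
    have e : (aa*dd + bb*cc)^2 + (aa*bb - cc*dd)^2
        = aa^2*dd^2 + bb^2*cc^2 + aa^2*bb^2 + cc^2*dd^2 := by ring
    rw [e, haa, hbb, hcc, hdd]
    linear_combination (q0 + q1) * hsp + hsq
  have e1 : p0 - q0 = (aa*dd - bb*cc)*(aa*dd + bb*cc) := by
    have e : (aa*dd - bb*cc)*(aa*dd + bb*cc) = aa^2*dd^2 - bb^2*cc^2 := by ring
    rw [e, haa, hbb, hcc, hdd]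
    linear_combination q0 * hsp - p0 * hsq
  have hsq_le : (p0 - q0)^2 ≤ 1 - F^2 := by
    have hFg : F^2 ≤ (bb*aa + dd*cc)^2 := pow_le_pow_left₀ hFnn hFle 2
    have h3 : (aa*dd + bb*cc)^2 ≤ 1 := by nlinarith [sq_nonneg (aa*bb - cc*dd)]
    have h4 : (p0 - q0)^2 = (aa*dd - bb*cc)^2 * (aa*dd + bb*cc)^2 := by rw [e1]; ring
    nlinarith [sq_nonneg (aa*dd - bb*cc)]
  calc p0 - q0 = Real.sqrt ((p0 - q0)^2) := by rw [Real.sqrt_sq hpos.le]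
  _ ≤ Real.sqrt (1 - F^2) := Real.sqrt_le_sqrt hsq_le

variable {ρ₀ ρ₁ : Matrix (Fin n) (Fin n) ℂ}

lemma upper_bound (h₀ : ρ₀.PosSemidef) (h₁ : ρ₁.PosSemidef)
    (ht₀ : ρ₀.trace = 1) (ht₁ : ρ₁.trace = 1) :
    traceDist ρ₀ ρ₁ ≤ Real.sqrt (1 - (fidelity h₀ h₁)^2) := by
  set F := fidelity h₀ h₁ with hFdef
  have hFnn : 0 ≤ F := fidelity_nonneg h₀ h₁
  have hΔh : (ρ₀ - ρ₁).IsHermitian := h₀.1.sub h₁.1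
  set p : ℝ → ℝ := fun x => if 0 ≤ x then 1 else 0 with hp
  set P := fc p hΔh with hP
  have hPh : Pᴴ = P := fc_conjTranspose _ _
  have hPP : P * P = P := fc_mul_fc hΔh p p p
    (fun i => by by_cases hx : 0 ≤ hΔh.eigenvalues i <;> simp [hp, hx])
  have hP'h : (1 - P)ᴴ = 1 - P := by rw [conjTranspose_sub, conjTranspose_one, hPh]
  have hP'P' : (1 - P) * (1 - P) = 1 - P := by
    rw [mul_sub, mul_one, sub_mul, one_mul, hPP]
    abel
  have hPpsd : P.PosSemidef := fc_posSemidef hΔh p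
    (fun i => by by_cases hx : 0 ≤ hΔh.eigenvalues i <;> simp [hp, hx])
  have hP'psd : (1 - P).PosSemidef := by
    rw [hP, one_sub_fc]
    refine fc_posSemidef hΔh _ fun i => ?_
    by_cases hx : 0 ≤ hΔh.eigenvalues i <;> simp [hp, hx]
  set p0 := ((P * ρ₀).trace).re with hp0
  set q0 := ((P * ρ₁).trace).re with hq0
  set p1 := (((1 - P) * ρ₀).trace).re with hp1
  set q1 := (((1 - P) * ρ₁).trace).re with hq1
  have hp0nn : 0 ≤ p0 := trace_proj_mul_nonneg hPh hPP h₀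
  have hq0nn : 0 ≤ q0 := trace_proj_mul_nonneg hPh hPP h₁
  have hp1nn : 0 ≤ p1 := trace_proj_mul_nonneg hP'h hP'P' h₀
  have hq1nn : 0 ≤ q1 := trace_proj_mul_nonneg hP'h hP'P' h₁
  have hsp : p0 + p1 = 1 := by
    have e : P * ρ₀ + (1 - P) * ρ₀ = ρ₀ := by noncomm_ring
    have := congrArg (fun M : Matrix (Fin n) (Fin n) ℂ => (M.trace).re) e
    simpa [trace_add, Complex.add_re, ht₀] using this
  have hsq : q0 + q1 = 1 := by
    have e : P * ρ₁ + (1 - P) * ρ₁ = ρ₁ := by noncomm_ring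
    have := congrArg (fun M : Matrix (Fin n) (Fin n) ℂ => (M.trace).re) e
    simpa [trace_add, Complex.add_re, ht₁] using this
  -- eigenvalue sum of Δ is zero
  have hsum0 : ∑ i, hΔh.eigenvalues i = 0 := by
    have e1 : (fc (fun x => x) hΔh).trace = (ρ₀ - ρ₁).trace := by rw [fc_id]
    rw [fc_trace, trace_sub, ht₀, ht₁, sub_self] at e1
    exact_mod_cast e1
  -- p0 - q0 equals trace distance
  have h_td : p0 - q0 = traceNorm (ρ₀ - ρ₁) / 2 := by
    have e0 : P * ρ₀ - P * ρ₁ = P * (ρ₀ - ρ₁) := (mul_sub _ _ _).symm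
    have e1 : (P * (ρ₀ - ρ₁)).trace = Complex.ofReal (∑ i,
        (if 0 ≤ hΔh.eigenvalues i then hΔh.eigenvalues i else 0)) := by
      rw [hP, fc_mul_base hΔh p (fun x => if 0 ≤ x then x else 0)
        (fun i => by by_cases hx : 0 ≤ hΔh.eigenvalues i <;> simp [hp, hx]), fc_trace]
    have e2 : p0 - q0 = ∑ i, (if 0 ≤ hΔh.eigenvalues i then hΔh.eigenvalues i else 0) := by
      rw [hp0, hq0, ← Complex.sub_re, ← trace_sub, e0, e1, Complex.ofReal_re]
    have e3 : ∀ x : ℝ, (if 0 ≤ x then x else 0) = (|x| + x) / 2 := by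
      intro x
      by_cases hx : 0 ≤ x
      · rw [if_pos hx, abs_of_nonneg hx]; ring
      · rw [if_neg hx, abs_of_neg (not_le.mp hx)]; ring
    rw [e2, traceNorm_hermitian hΔh]
    rw [Finset.sum_congr rfl (fun i _ => e3 _), ← Finset.sum_div, Finset.sum_add_distrib,
      hsum0, add_zero]
  -- fidelity measurement bound
  have hah : (psdSqrt h₀)ᴴ = (psdSqrt h₀) := (psdSqrt_posSemidef h₀).1
  have hbh : (psdSqrt h₁)ᴴ = (psdSqrt h₁) := (psdSqrt_posSemidef h₁).1
  set W := polarW ((psdSqrt h₁) * (psdSqrt h₀)) with hW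
  have hWc : (1 - W * Wᴴ).PosSemidef := by
    have := polarW_contraction ((psdSqrt h₁) * (psdSqrt h₀))
    exact contract_flip this
  have hF2 : F = ((Wᴴ * ((psdSqrt h₁) * (psdSqrt h₀))).trace).re := by
    rw [hFdef, fidelity_eq_traceNorm h₀ h₁, hW, polarW_conj_mul_self ((psdSqrt h₁) * (psdSqrt h₀))]
    rfl
  have hsplit : Wᴴ * ((psdSqrt h₁) * (psdSqrt h₀))
      = (Wᴴ * (psdSqrt h₁)) * (P * (psdSqrt h₀)) + (Wᴴ * (psdSqrt h₁)) * ((1 - P) * (psdSqrt h₀)) := by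
    noncomm_ring
  have bound1 : ‖((Wᴴ * (psdSqrt h₁)) * (P * (psdSqrt h₀))).trace‖ ≤
      Real.sqrt q0 * Real.sqrt p0 := by
    have := fid_term_bound hah hbh hPh hPP hPpsd hWc
    rwa [psdSqrt_mul_self h₀, psdSqrt_mul_self h₁] at this
  have bound2 : ‖((Wᴴ * (psdSqrt h₁)) * ((1 - P) * (psdSqrt h₀))).trace‖ ≤
      Real.sqrt q1 * Real.sqrt p1 := by
    have := fid_term_bound hah hbh hP'h hP'P' hP'psd hWc
    rwa [psdSqrt_mul_self h₀, psdSqrt_mul_self h₁] at this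
  have hFle : F ≤ Real.sqrt q0 * Real.sqrt p0 + Real.sqrt q1 * Real.sqrt p1 := by
    rw [hF2, hsplit, trace_add, Complex.add_re]
    have r1 := (Complex.re_le_norm _).trans bound1
    have r2 := (Complex.re_le_norm _).trans bound2
    linarith
  -- final algebra
  unfold traceDist
  rw [← h_td]
  exact fvg_algebra hp0nn hq0nn hp1nn hq1nn hsp hsq hFnn hFle

end main2

section pure

variable {ρ₀ ρ₁ : Matrix (Fin n) (Fin n) ℂ}

lemma pure_fidelity (h₀ : ρ₀.PosSemidef) (h₁ : ρ₁.PosSemidef) (ht₀ : ρ₀.trace = 1)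
    (ψ : Fin n → ℂ) (hψ : ∑ i, ‖ψ i‖^2 = 1) (hρ : ρ₀ = outer ψ) :
    fidelity h₀ h₁ = Real.sqrt ((star ψ ⬝ᵥ ρ₁ *ᵥ ψ).re) := by
  have hnψ : star ψ ⬝ᵥ ψ = 1 := by
    rw [dot_self_eq]
    have : nsq ψ = 1 := by
      rw [← hψ]
      unfold nsq
      exact Finset.sum_congr rfl fun i _ => (Complex.sq_norm _).symm
    rw [this, Complex.ofReal_one]
  have hρsq : ρ₀ * ρ₀ = ρ₀ := by
    rw [hρ]
    ext i j
    rw [mul_apply]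
    simp only [outer, vecMulVec_apply]
    calc ∑ k, ψ i * star ψ k * (ψ k * star ψ j)
        = (ψ i * star ψ j) * ∑ k, star ψ k * ψ k := by
          rw [Finset.mul_sum]
          exact Finset.sum_congr rfl fun k _ => by ring
    _ = ψ i * star ψ j := by
          rw [show (∑ k, star ψ k * ψ k) = star ψ ⬝ᵥ ψ from rfl, hnψ, mul_one]
  have hsq0 : ρ₀ = (psdSqrt h₀) := psd_eq_sqrt_of_sq_eq h₀ h₀ (by rw [pow_two, hρsq])
  set c := star ψ ⬝ᵥ ρ₁ *ᵥ ψ with hc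
  have hc0 : (0 : ℂ) ≤ c := h₁.dotProduct_mulVec_nonneg ψ
  have hcim : c.im = 0 := ((Complex.le_def.mp hc0).2).symm
  have hcre_nn : 0 ≤ c.re := (Complex.le_def.mp hc0).1
  have hcre : c = Complex.ofReal c.re := by
    apply Complex.ext
    · simp
    · simp [hcim]
  have hmid : ρ₀ * ρ₁ * ρ₀ = c • ρ₀ := by
    rw [hρ]
    ext i j
    rw [mul_apply]
    simp only [outer, vecMulVec_apply, Matrix.smul_apply, smul_eq_mul, mul_apply]
    have hcval : c = ∑ k, star ψ k * ∑ l, ρ₁ k l * ψ l := rfl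
    calc ∑ l, (∑ k, ψ i * star ψ k * ρ₁ k l) * (ψ l * star ψ j)
        = (ψ i * star ψ j) * ∑ l, ∑ k, star ψ k * ρ₁ k l * ψ l := by
          rw [Finset.mul_sum]
          refine Finset.sum_congr rfl fun l _ => ?_
          rw [Finset.sum_mul, Finset.mul_sum]
          exact Finset.sum_congr rfl fun k _ => by ring
    _ = c * (ψ i * star ψ j) := by
          rw [hcval, mul_comm]
          congr 1
          rw [Finset.sum_comm]
          refine Finset.sum_congr rfl fun k _ => ?_
          rw [Finset.mul_sum]
          exact Finset.sum_congr rfl fun l _ => by ring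
  set X := ((Real.sqrt c.re : ℝ) : ℂ) • ρ₀ with hX
  have hXpsd : X.PosSemidef := by
    refine PosSemidef.of_dotProduct_mulVec_nonneg ?_ ?_
    · show Xᴴ = X
      rw [hX, conjTranspose_smul, h₀.1]
      congr 1
      simp [Complex.conj_ofReal]
    · intro x
      rw [hX, smul_mulVec, dotProduct_smul]
      have h2 := h₀.dotProduct_mulVec_nonneg x
      have him : (star x ⬝ᵥ ρ₀ *ᵥ x).im = 0 := ((Complex.le_def.mp h2).2).symm
      have hre : 0 ≤ (star x ⬝ᵥ ρ₀ *ᵥ x).re := (Complex.le_def.mp h2).1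
      rw [Complex.le_def]
      constructor
      · simp [Complex.smul_re, Complex.smul_im, him]
        positivity
      · simp [Complex.smul_im, him]
  have hXsq : X ^ 2 = c • ρ₀ := by
    rw [hX, pow_two, smul_mul_smul_comm, hρsq, ← Complex.ofReal_mul,
      Real.mul_self_sqrt hcre_nn, ← hcre]
  have hcρpsd : (c • ρ₀).PosSemidef := by
    rw [← hXsq]
    exact hXpsd.pow 2
  have hkey : (psdSqrt h₀) * ρ₁ * (psdSqrt h₀) = c • ρ₀ := by
    rw [← hsq0, hmid]
  have hsqrt : (psdSqrt hcρpsd) = X := (psd_eq_sqrt_of_sq_eq hXpsd hcρpsd hXsq).symm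
  rw [fidelity_congr h₀ h₁ hcρpsd hkey, hsqrt, hX, trace_smul, ht₀]
  simp

end pure


theorem stmt_16 {n : ℕ} (ρ₀ ρ₁ : Matrix (Fin n) (Fin n) ℂ)
    (h₀ : ρ₀.PosSemidef) (h₁ : ρ₁.PosSemidef)
    (ht₀ : ρ₀.trace = 1) (ht₁ : ρ₁.trace = 1) :
    (1 - fidelity h₀ h₁ ≤ traceDist ρ₀ ρ₁ ∧
      traceDist ρ₀ ρ₁ ≤ Real.sqrt (1 - (fidelity h₀ h₁)^2)) ∧
    (∀ ψ : Fin n → ℂ, (∑ i, ‖ψ i‖^2 = 1) → ρ₀ = outer ψ →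
      fidelity h₀ h₁ = Real.sqrt ((star ψ ⬝ᵥ ρ₁ *ᵥ ψ).re)) := by
  exact ⟨⟨lower_bound h₀ h₁ ht₀ ht₁, upper_bound h₀ h₁ ht₀ ht₁⟩,
    fun ψ hψ hρ => pure_fidelity h₀ h₁ ht₀ ψ hψ hρ⟩
end

section
/- Let |χ⟩ = |0⟩|φ₀⟩ + |1⟩|φ₁⟩ with ⟨φ₁|φ₁⟩ = k₀/N for integers 0 ≤ k₀ ≤ N, and let k ≥ k₀ be an integer with N ≤ 2k. Consider the state |Ψ⟩ = |0⟩⊗|χ⟩⊗(1/√(2k))Σ_{z=0}^{2k-1}|z⟩, followed by a Toffoli flipping the first qubit to |1⟩ exactly when the second register's first qubit is |1⟩ and z < N. Then the probability that the first qubit measures 1 equals k₀/(2k), and the post-measurement state on the second register (conditioned on outcome 1, after normalizing) is |1⟩|φ₁⟩⟨φ₁|⟨1|/(k₀/N), i.e., identical to the conditional output of measuring |χ⟩ directly. -/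
lemma sum_ite_fin {M : Type*} [AddCommMonoid M] (m N : ℕ) (h : N ≤ m) (c : M) :
    ∑ z : Fin m, (if (z : ℕ) < N then c else 0) = N • c := by
  rw [Fin.sum_univ_eq_sum_range (fun i => if i < N then c else 0)]
  rw [← Finset.sum_filter]
  have : (Finset.range m).filter (fun i => i < N) = Finset.range N := by
    ext i; simp; omega
  rw [this, Finset.sum_const, Finset.card_range]

theorem stmt_18 (d N k₀ k : ℕ) (hk₀N : k₀ ≤ N) (hk₀k : k₀ ≤ k) (hN2k : N ≤ 2*k)
    (φ₀ φ₁ : Fin d → ℂ)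
    (hφ₁ : ∑ r, ‖φ₁ r‖^2 = (k₀ : ℝ) / N) :
    -- the state `|χ⟩ = |0⟩|φ₀⟩ + |1⟩|φ₁⟩`
    let χ : Fin 2 × Fin d → ℂ := fun p => if p.1 = 0 then φ₀ p.2 else φ₁ p.2
    -- the state after tensoring with `|0⟩` and the uniform superposition over
    -- `{0,…,2k-1}` and applying the Toffoli flipping the first qubit exactly when
    -- the second register's first qubit is `|1⟩` and `z < N`
    let Ψ' : Fin 2 × (Fin 2 × Fin d) × Fin (2*k) → ℂ := fun q =>
      if (q.1 = 1) ↔ (q.2.1.1 = 1 ∧ (q.2.2 : ℕ) < N) then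
        χ q.2.1 / Real.sqrt (2*k) else 0
    -- probability of measuring `1` on the first qubit
    (∑ x : Fin 2 × Fin d, ∑ z : Fin (2*k), ‖Ψ' (1, x, z)‖^2
        = (k₀ : ℝ) / (2*k)) ∧
    -- the conditional post-measurement state on the second register equals the
    -- conditional output of measuring `|χ⟩` directly
    (∀ x y : Fin 2 × Fin d,
      (∑ z : Fin (2*k), Ψ' (1, x, z) * starRingEnd ℂ (Ψ' (1, y, z)))
          / (((k₀ : ℝ) / (2*k) : ℝ) : ℂ)
        = ((if x.1 = 1 then φ₁ x.2 else 0) * starRingEnd ℂ (if y.1 = 1 then φ₁ y.2 else 0))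
          / (((k₀ : ℝ) / N : ℝ) : ℂ)) := by
  intro χ Ψ'
  have hΨ : ∀ (x : Fin 2 × Fin d) (z : Fin (2*k)),
      Ψ' (1, x, z) = if x.1 = 1 ∧ (z : ℕ) < N then χ x / Real.sqrt (2*k) else 0 := by
    intro x z; simp [Ψ']
  have hχ1 : ∀ x : Fin 2 × Fin d, x.1 = 1 → χ x = φ₁ x.2 := by
    intro x hx; simp [χ, hx]
  have h2k : (0:ℝ) ≤ 2*k := by positivity
  constructor
  · -- probability
    have step : ∀ x : Fin 2 × Fin d, ∑ z : Fin (2*k), ‖Ψ' (1, x, z)‖^2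
        = if x.1 = 1 then (N : ℝ) * (‖χ x‖^2 / (2*(k:ℝ))) else 0 := by
      intro x
      by_cases hx : x.1 = 1
      · have : ∀ z : Fin (2*k), ‖Ψ' (1, x, z)‖^2
            = if (z : ℕ) < N then ‖χ x‖^2 / (2*(k:ℝ)) else 0 := by
          intro z
          rw [hΨ]
          by_cases hz : (z : ℕ) < N
          · simp only [hx, hz, and_self, if_true, true_and]
            rw [norm_div, Complex.norm_real, Real.norm_of_nonneg (Real.sqrt_nonneg _),
              div_pow, Real.sq_sqrt h2k]
          · simp [hx, hz]
        rw [Finset.sum_congr rfl (fun z _ => this z), sum_ite_fin _ _ hN2k, if_pos hx,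
          nsmul_eq_mul]
      · simp [hΨ, hx]
    rw [Finset.sum_congr rfl (fun x _ => step x), Fintype.sum_prod_type]
    rw [Fin.sum_univ_two]
    have hr : ∀ r : Fin d, χ ((1 : Fin 2), r) = φ₁ r := fun r => hχ1 _ rfl
    simp only [show ((0 : Fin 2) = 1) = False from by decide,
      show ((1 : Fin 2) = 1) = True from by decide, if_false, if_true,
      Finset.sum_const_zero, zero_add, hr]
    rw [← Finset.mul_sum, ← Finset.sum_div, hφ₁]
    rcases Nat.eq_zero_or_pos N with h0 | hNpos
    · subst h0
      interval_cases k₀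
      simp
    · have hk : 0 < k := by omega
      have hN : (N:ℝ) ≠ 0 := by positivity
      have hkk : (k:ℝ) ≠ 0 := Nat.cast_ne_zero.mpr (by omega)
      field_simp
  · -- conditional state
    intro x y
    have key : ∑ z : Fin (2*k), Ψ' (1, x, z) * starRingEnd ℂ (Ψ' (1, y, z))
        = if x.1 = 1 ∧ y.1 = 1 then
            (N : ℂ) * (χ x * starRingEnd ℂ (χ y)) / (2*(k:ℂ)) else 0 := by
      have term : ∀ z : Fin (2*k), Ψ' (1, x, z) * starRingEnd ℂ (Ψ' (1, y, z))
          = if (z : ℕ) < N then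
              (if x.1 = 1 ∧ y.1 = 1 then χ x * starRingEnd ℂ (χ y) / (2*(k:ℂ)) else 0)
            else 0 := by
        intro z
        rw [hΨ, hΨ]
        by_cases hz : (z : ℕ) < N
        · by_cases hx : x.1 = 1 <;> by_cases hy : y.1 = 1 <;>
            simp only [hx, hy, hz, and_self, true_and, and_true, if_true, if_false,
              false_and, and_false, mul_zero, zero_mul, map_zero] <;> try rfl
          rw [map_div₀, Complex.conj_ofReal, div_mul_div_comm]
          congr 1
          rw [← Complex.ofReal_mul, Real.mul_self_sqrt h2k]
          push_cast; ring
        · simp [hz]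
      rw [Finset.sum_congr rfl (fun z _ => term z), sum_ite_fin _ _ hN2k]
      by_cases hxy : x.1 = 1 ∧ y.1 = 1
      · simp only [if_pos hxy, nsmul_eq_mul]; ring
      · simp [hxy]
    rw [key]
    rcases Nat.eq_zero_or_pos k₀ with hk0 | hk0pos
    · subst hk0
      have hφ0 : ∀ r, φ₁ r = 0 := by
        intro r
        have hnn : ∀ r ∈ Finset.univ, (0:ℝ) ≤ ‖φ₁ r‖^2 := fun r _ => by positivity
        have hsum0 : ∑ r, ‖φ₁ r‖^2 = 0 := by rw [hφ₁]; simp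
        have := (Finset.sum_eq_zero_iff_of_nonneg hnn).mp hsum0 r (Finset.mem_univ r)
        have habs : ‖φ₁ r‖ = 0 := by nlinarith [norm_nonneg (φ₁ r)]
        exact norm_eq_zero.mp habs
      simp [hφ0]
    · have hN : 0 < N := by omega
      have hk : 0 < k := by omega
      by_cases hx : x.1 = 1 <;> by_cases hy : y.1 = 1
      · rw [if_pos ⟨hx, hy⟩, hχ1 x hx, hχ1 y hy, if_pos hx, if_pos hy]
        have hNc : (N:ℂ) ≠ 0 := Nat.cast_ne_zero.mpr (by omega)
        have hkc : (k:ℂ) ≠ 0 := Nat.cast_ne_zero.mpr (by omega)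
        have hk0c : (k₀:ℂ) ≠ 0 := Nat.cast_ne_zero.mpr (by omega)
        push_cast
        field_simp
      all_goals simp [hx, hy]
end

section
/- Let c, s ∈ [0,1] with s < c and set s' = (1/2)(s/c)³ - 2(s/c)² + (5/2)(s/c). If additionally c - s ≥ 1/p for some real p > c, then 1 - s' ≥ (1/2)((c/p)² + (c/p)³) > 0. -/
theorem stmt_19 (c s p : ℝ) (hc : c ∈ Set.Icc (0:ℝ) 1) (hs : s ∈ Set.Icc (0:ℝ) 1)
    (hsc : s < c) (hp : p > c) (hgap : c - s ≥ 1/p) :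
    let s' : ℝ := (1/2) * (s/c)^3 - 2 * (s/c)^2 + (5/2) * (s/c)
    1 - s' ≥ (1/2) * ((c/p)^2 + (c/p)^3) ∧ (0:ℝ) < (1/2) * ((c/p)^2 + (c/p)^3) := by
  intro s'
  obtain ⟨hs0, hs1⟩ := hs
  obtain ⟨hc0, hc1⟩ := hc
  have hcpos : 0 < c := lt_of_le_of_lt hs0 hsc
  have hppos : 0 < p := lt_trans hcpos hp
  have hcp : 0 < c / p := div_pos hcpos hppos
  have hcp1 : c / p ≤ 1 := by
    rw [div_le_one hppos]; linarith
  set t : ℝ := s / c with ht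
  have ht0 : 0 ≤ t := div_nonneg hs0 hcpos.le
  -- 1 - t ≥ c/p
  have hkey : 1 - t ≥ c / p := by
    have h1 : c - s ≥ c / p * c := by
      have : c / p * c ≤ 1 / p := by
        rw [div_mul_eq_mul_div, div_le_div_iff₀ hppos hppos]
        nlinarith [mul_nonneg (mul_nonneg (sub_nonneg.2 hc1) (by linarith : (0:ℝ) ≤ 1+c)) hppos.le]
      linarith
    have : t ≤ 1 - c / p := by
      rw [ht, div_le_iff₀ hcpos]
      nlinarith
    linarith
  have ht1 : t ≤ 1 := by nlinarith
  have hx : 1 - s' = (1/2) * ((1-t)^2 + (1-t)^3) := by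
    simp only [s']
    ring
  rw [hx]
  constructor
  · have h2 : (c/p)^2 ≤ (1-t)^2 := by nlinarith
    have h3 : (c/p)^3 ≤ (1-t)^3 := by nlinarith
    linarith
  · positivity
end
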